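/- arXiv:2202.01113 — 8 statements merged into one kernel-verified Lean document; each statement's English description precedes it below -/
import Mathlib

section
/- Let {v^k}, {α^k}, {p^k} be nonnegative adapted random scalar sequences and {q^k} a deterministic nonnegative scalar sequence such that Σ_{k=0}^∞ α^k < ∞ almost surely, Σ_{k=0}^∞ q^k = ∞, Σ_{k=0}^∞ p^k < ∞ almost surely, and E[v^{k+1} | 𝓕^k] ≤ (1 + α^k − q^k) v^k + p^k almost surely for all k ≥ 0. Then Σ_{k=0}^∞ q^k v^k < ∞ and lim_{k→∞} v^k = 0 hold almost surely. -/
/-!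
Dividing by `A k = ∏_{j<k} (1 + α j)` absorbs the `α`-term of the recursion: the process
`Z k = v k / A k + ∑_{j<k} (q j v j / A (j+1) - p j)` is a supermartingale bounded below by the
predictable sums `-∑_{j<k} p j`. Stopping just before these sums exceed a level `a` yields
supermartingales bounded below by `-a`, which converge a.s.; since `∑ p < ∞` a.s., `Z` itself
converges a.s. Along such a path `1 ≤ A k ≤ exp (∑ α)`, so `∑ q v < ∞` and `v k / A k` converges;
its limit vanishes because `∑ q = ∞`, hence `v k → 0`.
-/

open MeasureTheory Filter Topology Finset

noncomputable def prodOneAdd (a : ℕ → ℝ) (k : ℕ) : ℝ := ∏ j ∈ range k, (1 + a j)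

section ProdOneAdd

variable {a : ℕ → ℝ}

lemma prodOneAdd_succ (a : ℕ → ℝ) (k : ℕ) :
    prodOneAdd a (k + 1) = prodOneAdd a k * (1 + a k) :=
  prod_range_succ _ _

lemma one_le_prodOneAdd (ha : ∀ j, 0 ≤ a j) (k : ℕ) : 1 ≤ prodOneAdd a k :=
  one_le_prod fun j _ => le_add_of_nonneg_right (ha j)

lemma prodOneAdd_le_exp_tsum (ha : ∀ j, 0 ≤ a j) (ha_sum : Summable a) (k : ℕ) :
    prodOneAdd a k ≤ Real.exp (∑' j, a j) :=
  (Real.prod_one_add_le_exp_sum _ ha).trans <|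
    Real.exp_le_exp.mpr (ha_sum.sum_le_tsum _ fun j _ => ha j)

end ProdOneAdd

lemma nonpos_of_tendsto_of_summable_mul {q w : ℕ → ℝ} {L : ℝ} (hq : ∀ k, 0 ≤ q k)
    (hq_div : ¬ Summable q) (hqw : Summable fun k => q k * w k) (hw : Tendsto w atTop (𝓝 L)) :
    L ≤ 0 := by
  by_contra! hL
  refine hq_div ((hqw.mul_left (2 / L)).of_norm_bounded_eventually_nat ?_)
  filter_upwards [hw.eventually (eventually_ge_nhds (half_lt_self hL))] with k hk
  rw [Real.norm_of_nonneg (hq k)]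
  calc q k = 2 / L * (q k * (L / 2)) := by field_simp
    _ ≤ 2 / L * (q k * w k) := by gcongr; exact hq k

lemma summable_and_tendsto_of_tendsto_add_sum {w t : ℕ → ℝ} {c : ℝ} (hw : ∀ k, 0 ≤ w k)
    (ht : ∀ k, 0 ≤ t k) (h : Tendsto (fun k => w k + ∑ j ∈ range k, t j) atTop (𝓝 c)) :
    Summable t ∧ Tendsto w atTop (𝓝 (c - ∑' j, t j)) := by
  obtain ⟨B, hB⟩ := h.bddAbove_range
  have ht_sum : Summable t := summable_of_sum_range_le ht fun k =>
    (le_add_of_nonneg_left (hw k)).trans (hB ⟨k, rfl⟩)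
  exact ⟨ht_sum, by simpa using h.sub ht_sum.hasSum.tendsto_sum_nat⟩

/-- The transform of `z` by the indicator of an initial segment `s` of `ℕ` is `z` stopped at the
first index outside `s`. -/
lemma exists_eq_add_sum_indicator_mul_sub (z : ℕ → ℝ) {s : Set ℕ} (hs : IsLowerSet s) (k : ℕ) :
    ∃ m ≤ k, (∀ j < m, j ∈ s) ∧ (m < k → m ∉ s) ∧
      z 0 + ∑ j ∈ range k, s.indicator 1 j * (z (j + 1) - z j) = z m := by
  induction k with
  | zero => exact ⟨0, le_rfl, by simp⟩
  | succ k ih =>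
    obtain ⟨m, hmk, hlt, hstop, heq⟩ := ih
    rw [sum_range_succ, ← add_assoc, heq]
    rcases hmk.lt_or_eq with hmk | rfl
    · have hk : k ∉ s := fun hk => hstop hmk (hs hmk.le hk)
      exact ⟨m, by omega, hlt, fun _ => hstop hmk, by simp [hk]⟩
    · by_cases hm : m ∈ s
      · refine ⟨m + 1, le_rfl, fun j hj => ?_, by omega, by simp [hm]⟩
        rcases Nat.lt_succ_iff_lt_or_eq.mp hj with hj | rfl
        exacts [hlt j hj, hm]
      · exact ⟨m, by omega, hlt, fun _ => hm, by simp [hm]⟩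

namespace MeasureTheory.Supermartingale

variable {Ω : Type*} {m0 : MeasurableSpace Ω} {μ : Measure Ω} [IsFiniteMeasure μ]
  {𝓕 : Filtration ℕ m0}

theorem exists_ae_tendsto_of_ae_bddBelow {Y : ℕ → Ω → ℝ} (hY : Supermartingale Y 𝓕 μ) {c : ℝ}
    (hc : ∀ k, ∀ᵐ ω ∂μ, c ≤ Y k ω) :
    ∀ᵐ ω ∂μ, ∃ L, Tendsto (fun k => Y k ω) atTop (𝓝 L) := by
  set R := ∫ ω, Y 0 ω ∂μ + 2 * |c| * μ.real Set.univ
  have hnorm k : ∫ ω, ‖Y k ω‖ ∂μ ≤ R :=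
    calc ∫ ω, ‖Y k ω‖ ∂μ ≤ ∫ ω, (Y k ω + 2 * |c|) ∂μ := by
          refine integral_mono_ae (hY.integrable k).norm
            ((hY.integrable k).add (integrable_const _)) ?_
          filter_upwards [hc k] with ω hω
          rw [Real.norm_eq_abs, abs_le]
          constructor <;> linarith [le_abs_self c, neg_abs_le c]
      _ = ∫ ω, Y k ω ∂μ + 2 * |c| * μ.real Set.univ := by
          rw [integral_add (hY.integrable k) (integrable_const _), integral_const, smul_eq_mul,
            mul_comm]
      _ ≤ R := by
          have := hY.setIntegral_le (Nat.zero_le k) MeasurableSet.univ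
          simp only [Measure.restrict_univ] at this
          linarith
  have hbdd k : eLpNorm ((-Y) k) 1 μ ≤ R.toNNReal := by
    rw [Pi.neg_apply, eLpNorm_neg, eLpNorm_one_eq_lintegral_enorm,
      ← ofReal_integral_norm_eq_lintegral_enorm (hY.integrable k)]
    exact ENNReal.ofReal_le_ofReal (hnorm k)
  filter_upwards [hY.neg.exists_ae_tendsto_of_bdd hbdd] with ω ⟨L, hL⟩
  exact ⟨-L, by simpa using hL.neg⟩

theorem add_sum_indicator_mul_sub {Z : ℕ → Ω → ℝ} (hZ : Supermartingale Z 𝓕 μ) {C : ℕ → Set Ω}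
    (hC : ∀ k, MeasurableSet[𝓕 k] (C k)) :
    Supermartingale
      (fun n ω => Z 0 ω + ∑ k ∈ range n, (C k).indicator 1 ω * (Z (k + 1) ω - Z k ω)) 𝓕 μ := by
  have hξ : StronglyAdapted 𝓕 fun k => (C k).indicator (1 : Ω → ℝ) := fun k =>
    stronglyMeasurable_one.indicator (hC k)
  have hsub := hZ.neg.sum_mul_sub hξ (R := 1) (fun k ω => Set.indicator_le_self' (by simp) ω)
    (fun k ω => Set.indicator_nonneg (by simp) ω)
  have hconst : Martingale (fun _ => Z 0) 𝓕 μ :=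
    martingale_const_fun 𝓕 μ (hZ.stronglyMeasurable 0) (hZ.integrable 0)
  have heq : (fun n ω => Z 0 ω + ∑ k ∈ range n, (C k).indicator 1 ω * (Z (k + 1) ω - Z k ω)) =
      (fun _ => Z 0) - fun n => ∑ k ∈ range n, (C k).indicator 1 * ((-Z) (k + 1) - (-Z) k) := by
    funext n ω
    simp only [Pi.sub_apply, Finset.sum_apply, Pi.mul_apply, Pi.neg_apply]
    rw [sub_eq_add_neg, ← sum_neg_distrib]
    exact congrArg _ (sum_congr rfl fun k _ => by ring)
  rw [heq]
  exact hconst.supermartingale.sub_submartingale hsub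

/-- Stopping `Z` as soon as the predictable `S` would exceed a level `a`
gives a supermartingale bounded below by `-a`, which agrees with `Z` on `{sup S ≤ a}`. -/
theorem exists_ae_tendsto_of_neg_le {Z S : ℕ → Ω → ℝ} (hZ : Supermartingale Z 𝓕 μ)
    (hS : ∀ k, Measurable[𝓕 k] (S (k + 1))) (hS0 : S 0 = 0)
    (hZS : ∀ᵐ ω ∂μ, ∀ k, -S k ω ≤ Z k ω)
    (hS_bdd : ∀ᵐ ω ∂μ, BddAbove (Set.range fun k => S k ω)) :
    ∀ᵐ ω ∂μ, ∃ L, Tendsto (fun k => Z k ω) atTop (𝓝 L) := by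
  let C (a : ℕ) (k : ℕ) : Set Ω := {ω | ∀ i ≤ k, S (i + 1) ω ≤ a}
  have hC_lower (a : ℕ) (ω : Ω) : IsLowerSet {k | ω ∈ C a k} :=
    fun _ _ hjk hω i hi => hω i (hi.trans hjk)
  have hC_meas (a k : ℕ) : MeasurableSet[𝓕 k] (C a k) := by
    simp only [C, Set.ofPred_forall]
    exact MeasurableSet.iInter fun i => MeasurableSet.iInter fun hi =>
      measurableSet_le ((hS i).mono (𝓕.mono hi) le_rfl) measurable_const
  let Y (a : ℕ) (n : ℕ) (ω : Ω) : ℝ :=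
    Z 0 ω + ∑ k ∈ range n, (C a k).indicator 1 ω * (Z (k + 1) ω - Z k ω)
  have hY_lb (a : ℕ) (n : ℕ) : ∀ᵐ ω ∂μ, -(a : ℝ) ≤ Y a n ω := by
    filter_upwards [hZS] with ω hω
    obtain ⟨m, -, hm, -, heq⟩ :=
      exists_eq_add_sum_indicator_mul_sub (Z · ω) (hC_lower a ω) n
    have hSm : S m ω ≤ a := by
      rcases m with _ | j
      · simp [hS0]
      · exact hm j j.lt_succ_self j le_rfl
    rw [show Y a n ω = Z m ω from heq]
    linarith [hω m]
  have hY_conv : ∀ᵐ ω ∂μ, ∀ a : ℕ, ∃ L, Tendsto (fun n => Y a n ω) atTop (𝓝 L) :=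
    ae_all_iff.mpr fun a =>
      (hZ.add_sum_indicator_mul_sub (hC_meas a)).exists_ae_tendsto_of_ae_bddBelow (hY_lb a)
  filter_upwards [hY_conv, hS_bdd] with ω hω ⟨B, hB⟩
  obtain ⟨a, ha⟩ := exists_nat_ge B
  have hY_eq n : Y a n ω = Z n ω := by
    obtain ⟨m, hmn, -, hstop, heq⟩ :=
      exists_eq_add_sum_indicator_mul_sub (Z · ω) (hC_lower a ω) n
    have hm : m = n := by
      by_contra hne
      exact hstop (hmn.lt_of_ne hne) fun i _ => (hB ⟨i + 1, rfl⟩).trans ha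
    exact hm ▸ heq
  obtain ⟨L, hL⟩ := hω a
  exact ⟨L, hL.congr hY_eq⟩

end MeasureTheory.Supermartingale

namespace RobbinsSiegmund

noncomputable def compensator (v a p q : ℕ → ℝ) (k : ℕ) : ℝ :=
  ∑ j ∈ range k, (q j * v j / prodOneAdd a (j + 1) - p j)

noncomputable def process (v a p q : ℕ → ℝ) (k : ℕ) : ℝ :=
  v k / prodOneAdd a k + compensator v a p q k

section Deterministic

variable {v a p q : ℕ → ℝ}

lemma neg_sum_le_process (hv : ∀ k, 0 ≤ v k) (ha : ∀ k, 0 ≤ a k) (hq : ∀ k, 0 ≤ q k) (k : ℕ) :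
    -∑ j ∈ range k, p j ≤ process v a p q k := by
  have hA k := one_le_prodOneAdd ha k
  have hW : 0 ≤ v k / prodOneAdd a k := div_nonneg (hv k) (by linarith [hA k])
  have hT : 0 ≤ ∑ j ∈ range k, q j * v j / prodOneAdd a (j + 1) :=
    sum_nonneg fun j _ => div_nonneg (mul_nonneg (hq j) (hv j)) (by linarith [hA (j + 1)])
  simp only [process, compensator, sum_sub_distrib]
  linarith

/-- The supermartingale step along a path, `x` playing the role of `E[v (k+1) | 𝓕 k]`. -/
lemma div_prodOneAdd_add_compensator_le {x : ℝ} {k : ℕ} (ha : ∀ j, 0 ≤ a j) (hp : 0 ≤ p k)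
    (hx : x ≤ (1 + a k - q k) * v k + p k) :
    x / prodOneAdd a (k + 1) + compensator v a p q (k + 1) ≤ process v a p q k := by
  have hA := one_le_prodOneAdd ha k
  have hA' := one_le_prodOneAdd ha (k + 1)
  have hx' : x / prodOneAdd a (k + 1) ≤ ((1 + a k - q k) * v k + p k) / prodOneAdd a (k + 1) :=
    div_le_div_of_nonneg_right hx (by linarith)
  have hp' : p k / prodOneAdd a (k + 1) ≤ p k := div_le_self hp hA'
  have hsplit : ((1 + a k - q k) * v k + p k) / prodOneAdd a (k + 1) =
      v k / prodOneAdd a k - q k * v k / prodOneAdd a (k + 1) + p k / prodOneAdd a (k + 1) := by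
    rw [prodOneAdd_succ] at *
    have : 0 < 1 + a k := by linarith [ha k]
    field_simp
  simp only [process, compensator, sum_range_succ] at *
  linarith

theorem summable_mul_and_tendsto_zero_of_tendsto_process (hv : ∀ k, 0 ≤ v k)
    (ha : ∀ k, 0 ≤ a k) (hq : ∀ k, 0 ≤ q k) (ha_sum : Summable a) (hp_sum : Summable p)
    (hq_div : ¬ Summable q) {c : ℝ} (hZ : Tendsto (process v a p q) atTop (𝓝 c)) :
    Summable (fun k => q k * v k) ∧ Tendsto v atTop (𝓝 0) := by
  set M := Real.exp (∑' j, a j)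
  have hA_pos k : 0 < prodOneAdd a k := one_pos.trans_le (one_le_prodOneAdd ha k)
  have hAM k : prodOneAdd a k ≤ M := prodOneAdd_le_exp_tsum ha ha_sum k
  have hW_nonneg k : 0 ≤ v k / prodOneAdd a k := div_nonneg (hv k) (hA_pos k).le
  obtain ⟨ht_sum, hW⟩ := summable_and_tendsto_of_tendsto_add_sum hW_nonneg
    (fun j => div_nonneg (mul_nonneg (hq j) (hv j)) (hA_pos (j + 1)).le)
    ((hZ.add hp_sum.hasSum.tendsto_sum_nat).congr fun k => by
      simp only [process, compensator, sum_sub_distrib]; ring)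
  set L := c + ∑' j, p j - ∑' j, q j * v j / prodOneAdd a (j + 1)
  have hqv : Summable fun k => q k * v k := by
    refine (ht_sum.mul_left M).of_nonneg_of_le (fun k => mul_nonneg (hq k) (hv k)) fun k => ?_
    rw [mul_div_assoc', le_div_iff₀ (hA_pos (k + 1)), mul_comm M]
    exact mul_le_mul_of_nonneg_left (hAM (k + 1)) (mul_nonneg (hq k) (hv k))
  have hqW : Summable fun k => q k * (v k / prodOneAdd a k) :=
    hqv.of_nonneg_of_le (fun k => mul_nonneg (hq k) (hW_nonneg k)) fun k =>
      mul_le_mul_of_nonneg_left (div_le_self (hv k) (one_le_prodOneAdd ha k)) (hq k)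
  have hL : L = 0 := le_antisymm (nonpos_of_tendsto_of_summable_mul hq hq_div hqW hW)
    (ge_of_tendsto' hW hW_nonneg)
  refine ⟨hqv, squeeze_zero hv (fun k => ?_) (by simpa [hL] using hW.const_mul M)⟩
  rw [mul_div_assoc', le_div_iff₀ (hA_pos k), mul_comm M]
  exact mul_le_mul_of_nonneg_left (hAM k) (hv k)

end Deterministic

section Random

variable {Ω : Type*} {m0 : MeasurableSpace Ω} {μ : Measure Ω} {𝓕 : Filtration ℕ m0}
  {v α p : ℕ → Ω → ℝ} {q : ℕ → ℝ}

lemma measurable_prodOneAdd (hα : Adapted 𝓕 α) {k n : ℕ} (hk : k ≤ n + 1) :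
    Measurable[𝓕 n] fun ω => prodOneAdd (α · ω) k :=
  Finset.measurable_prod _ fun j hj =>
    measurable_const.add ((hα j).mono (𝓕.mono (by simp at hj; omega)) le_rfl)

lemma measurable_compensator (hv : Adapted 𝓕 v) (hα : Adapted 𝓕 α) (hp : Adapted 𝓕 p)
    {k n : ℕ} (hk : k ≤ n + 1) :
    Measurable[𝓕 n] fun ω => compensator (v · ω) (α · ω) (p · ω) q k := by
  refine Finset.measurable_sum _ fun j hj => ?_
  have hjn : j ≤ n := by simp at hj; omega
  exact (measurable_const.mul ((hv j).mono (𝓕.mono hjn) le_rfl)).div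
    (measurable_prodOneAdd hα (by omega)) |>.sub ((hp j).mono (𝓕.mono hjn) le_rfl)

lemma adapted_process (hv : Adapted 𝓕 v) (hα : Adapted 𝓕 α) (hp : Adapted 𝓕 p) :
    Adapted 𝓕 fun k ω => process (v · ω) (α · ω) (p · ω) q k := fun k =>
  ((hv k).div (measurable_prodOneAdd hα (by omega))).add
    (measurable_compensator hv hα hp (by omega))

lemma integrable_div_prodOneAdd {f : Ω → ℝ} (hf : Integrable f μ) (hα : Adapted 𝓕 α)
    (hα0 : ∀ᵐ ω ∂μ, ∀ j, 0 ≤ α j ω) (k : ℕ) :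
    Integrable (fun ω => f ω / prodOneAdd (α · ω) k) μ := by
  have hmeas : Measurable fun ω => (prodOneAdd (α · ω) k)⁻¹ :=
    ((measurable_prodOneAdd hα k.le_succ).mono (𝓕.le k) le_rfl).inv
  refine (hf.bdd_mul (c := 1) hmeas.aestronglyMeasurable ?_).congr
    (.of_forall fun ω => by simp [div_eq_inv_mul])
  filter_upwards [hα0] with ω hω
  rw [norm_inv, Real.norm_of_nonneg (zero_le_one.trans (one_le_prodOneAdd hω k))]
  exact inv_le_one_of_one_le₀ (one_le_prodOneAdd hω k)

lemma integrable_compensator (hv_int : ∀ k, Integrable (v k) μ) (hp_int : ∀ k, Integrable (p k) μ)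
    (hα : Adapted 𝓕 α) (hα0 : ∀ᵐ ω ∂μ, ∀ j, 0 ≤ α j ω) (k : ℕ) :
    Integrable (fun ω => compensator (v · ω) (α · ω) (p · ω) q k) μ :=
  integrable_finsetSum _ fun j _ =>
    (integrable_div_prodOneAdd ((hv_int j).const_mul (q j)) hα hα0 (j + 1)).sub (hp_int j)

theorem supermartingale_process [IsFiniteMeasure μ] (hv : Adapted 𝓕 v) (hα : Adapted 𝓕 α)
    (hp : Adapted 𝓕 p) (hv_int : ∀ k, Integrable (v k) μ) (hp_int : ∀ k, Integrable (p k) μ)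
    (hα0 : ∀ᵐ ω ∂μ, ∀ j, 0 ≤ α j ω) (hp0 : ∀ᵐ ω ∂μ, ∀ j, 0 ≤ p j ω)
    (hrec : ∀ k, ∀ᵐ ω ∂μ, μ[v (k + 1) | 𝓕 k] ω ≤ (1 + α k ω - q k) * v k ω + p k ω) :
    Supermartingale (fun k ω => process (v · ω) (α · ω) (p · ω) q k) 𝓕 μ := by
  refine supermartingale_nat (adapted_process hv hα hp).stronglyAdapted
    (fun k => (integrable_div_prodOneAdd (hv_int k) hα hα0 k).add
      (integrable_compensator hv_int hp_int hα hα0 k)) fun k => ?_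
  set g : Ω → ℝ := fun ω => (prodOneAdd (α · ω) (k + 1))⁻¹
  set R : Ω → ℝ := fun ω => compensator (v · ω) (α · ω) (p · ω) q (k + 1)
  have hg : StronglyMeasurable[𝓕 k] g := (measurable_prodOneAdd hα le_rfl).inv.stronglyMeasurable
  have hR : StronglyMeasurable[𝓕 k] R :=
    (measurable_compensator hv hα hp le_rfl).stronglyMeasurable
  have hvg : Integrable (v (k + 1) * g) μ :=
    (integrable_div_prodOneAdd (hv_int (k + 1)) hα hα0 (k + 1)).congr
      (.of_forall fun ω => by simp [g, div_eq_mul_inv])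
  have hR_int : Integrable R μ := integrable_compensator hv_int hp_int hα hα0 (k + 1)
  have hsplit : (fun ω => process (v · ω) (α · ω) (p · ω) q (k + 1)) = v (k + 1) * g + R := by
    funext ω
    simp [process, g, R, div_eq_mul_inv]
  rw [hsplit]
  filter_upwards [condExp_add hvg hR_int (𝓕 k),
    condExp_mul_of_stronglyMeasurable_right hg hvg (hv_int (k + 1)), hrec k, hα0, hp0]
    with ω h_add h_mul h_rec hαω hpω
  rw [h_add, Pi.add_apply, h_mul, condExp_of_stronglyMeasurable (𝓕.le k) hR hR_int]
  simpa [g, R, div_eq_mul_inv] using div_prodOneAdd_add_compensator_le hαω (hpω k) h_rec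

end Random

end RobbinsSiegmund

theorem stmt0_general
    {Ω : Type*} {m0 : MeasurableSpace Ω} {μ : Measure Ω} [IsProbabilityMeasure μ]
    (𝓕 : Filtration ℕ m0)
    (v α p : ℕ → Ω → ℝ) (q : ℕ → ℝ)
    (hv_adapted : Adapted 𝓕 v)
    (hα_adapted : Adapted 𝓕 α)
    (hp_adapted : Adapted 𝓕 p)
    (hv_int : ∀ k, Integrable (v k) μ)
    (hp_int : ∀ k, Integrable (p k) μ)
    (hv_nonneg : ∀ k, ∀ᵐ ω ∂μ, 0 ≤ v k ω)
    (hα_nonneg : ∀ k, ∀ᵐ ω ∂μ, 0 ≤ α k ω)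
    (hp_nonneg : ∀ k, ∀ᵐ ω ∂μ, 0 ≤ p k ω)
    (hq_nonneg : ∀ k, 0 ≤ q k)
    (hα_sum : ∀ᵐ ω ∂μ, Summable (fun k => α k ω))
    (hq_div : ¬ Summable q)
    (hp_sum : ∀ᵐ ω ∂μ, Summable (fun k => p k ω))
    (hrec : ∀ k, ∀ᵐ ω ∂μ,
      (μ[v (k+1) | 𝓕 k]) ω ≤ (1 + α k ω - q k) * v k ω + p k ω) :
    ∀ᵐ ω ∂μ, Summable (fun k => q k * v k ω) ∧
      Tendsto (fun k => v k ω) atTop (𝓝 (0 : ℝ)) := by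
  have hv0 : ∀ᵐ ω ∂μ, ∀ k, 0 ≤ v k ω := ae_all_iff.mpr hv_nonneg
  have hα0 : ∀ᵐ ω ∂μ, ∀ k, 0 ≤ α k ω := ae_all_iff.mpr hα_nonneg
  have hZ := RobbinsSiegmund.supermartingale_process hv_adapted hα_adapted hp_adapted hv_int
    hp_int hα0 (ae_all_iff.mpr hp_nonneg) hrec
  have hZ_conv := hZ.exists_ae_tendsto_of_neg_le (S := fun k ω => ∑ j ∈ range k, p j ω)
    (fun k => Finset.measurable_sum _ fun j hj =>
      (hp_adapted j).mono (𝓕.mono (Nat.lt_succ_iff.mp (mem_range.mp hj))) le_rfl)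
    (by ext; simp)
    (by filter_upwards [hv0, hα0] with ω hv hα
        exact RobbinsSiegmund.neg_sum_le_process hv hα hq_nonneg)
    (by filter_upwards [hp_sum] with ω hp using hp.hasSum.tendsto_sum_nat.bddAbove_range)
  filter_upwards [hZ_conv, hv0, hα0, hα_sum, hp_sum] with ω ⟨c, hc⟩ hv hα hα_sum hp_sum
  exact RobbinsSiegmund.summable_mul_and_tendsto_zero_of_tendsto_process hv hα hq_nonneg hα_sum
    hp_sum hq_div hc

/-- Robbins–Siegmund type lemma (Lemma 2 of the paper): if nonnegative adapted
random sequences satisfy `E[v^{k+1} | 𝓕^k] ≤ (1 + α^k − q^k) v^k + p^k` a.s. with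
`Σ α^k < ∞` a.s., `Σ p^k < ∞` a.s. and the deterministic sequence `q` satisfying
`Σ q^k = ∞`, then `Σ q^k v^k < ∞` and `v^k → 0` almost surely. -/
theorem stmt0
    {Ω : Type*} {m0 : MeasurableSpace Ω} {μ : Measure Ω} [IsProbabilityMeasure μ]
    (𝓕 : Filtration ℕ m0)
    (v α p : ℕ → Ω → ℝ) (q : ℕ → ℝ)
    (hv_adapted : Adapted 𝓕 v)
    (hα_adapted : Adapted 𝓕 α)
    (hp_adapted : Adapted 𝓕 p)
    (hv_int : ∀ k, Integrable (v k) μ)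
    (hα_int : ∀ k, Integrable (α k) μ)
    (hp_int : ∀ k, Integrable (p k) μ)
    (hv_nonneg : ∀ k, ∀ᵐ ω ∂μ, 0 ≤ v k ω)
    (hα_nonneg : ∀ k, ∀ᵐ ω ∂μ, 0 ≤ α k ω)
    (hp_nonneg : ∀ k, ∀ᵐ ω ∂μ, 0 ≤ p k ω)
    (hq_nonneg : ∀ k, 0 ≤ q k)
    (hα_sum : ∀ᵐ ω ∂μ, Summable (fun k => α k ω))
    (hq_div : ¬ Summable q)
    (hp_sum : ∀ᵐ ω ∂μ, Summable (fun k => p k ω))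
    (hrec : ∀ k, ∀ᵐ ω ∂μ,
      (μ[v (k+1) | 𝓕 k]) ω ≤ (1 + α k ω - q k) * v k ω + p k ω) :
    ∀ᵐ ω ∂μ, Summable (fun k => q k * v k ω) ∧
      Tendsto (fun k => v k ω) atTop (𝓝 (0 : ℝ)) :=
  stmt0_general 𝓕 v α p q hv_adapted hα_adapted hp_adapted hv_int hp_int hv_nonneg hα_nonneg
    hp_nonneg hq_nonneg hα_sum hq_div hp_sum hrec
end

section
/- Let {v^k} be a nonnegative real sequence and set α^k = a(k+1)^{−s} and β^k = b(k+1)^{−t}, where a, b > 0, 0 < s < 1 and t > s (so that Σα^k = ∞, α^k → 0, and β^k/α^k → 0 at a polynomial rate). If there exists K ≥ 0 such that v^{k+1} ≤ (1 − α^k) v^k + β^k holds for all k ≥ K, then there exists a constant C such that v^k ≤ C · β^k/α^k = C (b/a)(k+1)^{−(t−s)} for all k ≥ 0. -/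
/-!
Write `r k = β k / α k`. If `v k ≤ C r k`, the recursion gives
`v (k+1) ≤ C r k - (C - 1) β k`, so the bound propagates to `k + 1` as soon as
`C (r k - r (k+1)) ≤ (C - 1) β k`; for `C ≥ 2` this follows once `r` drops by at most `β k / 2`
per step, and `C` is then enlarged to cover the finitely many initial terms.
For the polynomial rates, `r k = (b/a)(k+1)^(s-t)` drops by at most
`(b/a)(t-s)(k+1)^(s-t-1) = β k · (t-s)(k+1)^(s-1) / a` (mean value theorem), which is `o(β k)`
because `s < 1`.
-/

open Filter Topology

namespace Real

theorem rpow_neg_sub_rpow_neg_add_one_le {x p : ℝ} (hx : 0 < x) (hp : 0 ≤ p) :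
    x ^ (-p) - (x + 1) ^ (-p) ≤ p * x ^ (-p - 1) := by
  obtain ⟨c, ⟨hxc, -⟩, hc⟩ := exists_hasDerivAt_eq_slope (fun y : ℝ ↦ y ^ (-p))
    (fun y ↦ -p * y ^ (-p - 1)) (lt_add_one x)
    (fun y hy ↦ (continuousAt_rpow_const y (-p)
      (Or.inl (hx.trans_le hy.1).ne')).continuousWithinAt)
    (fun y hy ↦ hasDerivAt_rpow_const (Or.inl (hx.trans hy.1).ne'))
  have hmono : c ^ (-p - 1) ≤ x ^ (-p - 1) :=
    rpow_le_rpow_of_nonpos hx hxc.le (by linarith)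
  rw [add_sub_cancel_left, div_one] at hc
  nlinarith

theorem two_mul_sub_rpow_add_one_le {a b s t x : ℝ} (ha : 0 < a) (hb : 0 ≤ b) (hst : s ≤ t)
    (hx : 0 < x) (hsmall : 2 * (t - s) * x ^ (s - 1) ≤ a) :
    2 * (b / a * x ^ (s - t) - b / a * (x + 1) ^ (s - t)) ≤ b * x ^ (-t) := by
  have hsub := rpow_neg_sub_rpow_neg_add_one_le hx (sub_nonneg.2 hst)
  rw [neg_sub] at hsub
  have hsplit : x ^ (s - t - 1) = x ^ (-t) * x ^ (s - 1) := by
    rw [← rpow_add hx]; ring_nf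
  calc 2 * (b / a * x ^ (s - t) - b / a * (x + 1) ^ (s - t))
      = 2 * (b / a) * (x ^ (s - t) - (x + 1) ^ (s - t)) := by ring
    _ ≤ 2 * (b / a) * ((t - s) * x ^ (s - t - 1)) := by gcongr
    _ = b / a * x ^ (-t) * (2 * (t - s) * x ^ (s - 1)) := by rw [hsplit]; ring
    _ ≤ b / a * x ^ (-t) * a := by gcongr
    _ = b * x ^ (-t) := by field_simp

end Real

theorem tendsto_natCast_add_one_rpow_of_neg {e : ℝ} (he : e < 0) :
    Tendsto (fun k : ℕ ↦ ((k : ℝ) + 1) ^ e) atTop (𝓝 0) := by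
  simpa [Function.comp_def] using (tendsto_rpow_neg_atTop (neg_pos.2 he)).comp
    (tendsto_atTop_add_const_right _ 1 tendsto_natCast_atTop_atTop)

theorem exists_le_mul_div_of_le_one_sub_mul_add {v α β : ℕ → ℝ}
    (hα : ∀ k, 0 < α k) (hβ : ∀ k, 0 < β k) (hα1 : ∀ᶠ k in atTop, α k ≤ 1)
    (hdecay : ∀ᶠ k in atTop, 2 * (β k / α k - β (k + 1) / α (k + 1)) ≤ β k)
    (hrec : ∀ᶠ k in atTop, v (k + 1) ≤ (1 - α k) * v k + β k) :
    ∃ C, ∀ k, v k ≤ C * (β k / α k) := by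
  set r : ℕ → ℝ := fun k ↦ β k / α k
  have hr_pos : ∀ k, 0 < r k := fun k ↦ div_pos (hβ k) (hα k)
  obtain ⟨N, hN⟩ := eventually_atTop.1 (hα1.and (hdecay.and hrec))
  obtain ⟨C₀, hC₀⟩ := ((Set.Iic N).toFinite.image fun k ↦ v k / r k).bddAbove
  set C := max 2 C₀
  have hinit : ∀ k ≤ N, v k ≤ C * r k := fun k hk ↦
    (div_le_iff₀ (hr_pos k)).1 ((hC₀ ⟨k, hk, rfl⟩).trans (le_max_right _ _))
  have hstep : ∀ k ≥ N, v k ≤ C * r k → v (k + 1) ≤ C * r (k + 1) := by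
    intro k hk ih
    obtain ⟨hαk, hdk, hrk⟩ := hN k hk
    have hβk : β k = α k * r k := (mul_div_cancel₀ (β k) (hα k).ne').symm
    have hC : 2 ≤ C := le_max_left _ _
    calc v (k + 1) ≤ (1 - α k) * v k + β k := hrk
      _ ≤ (1 - α k) * (C * r k) + β k := by gcongr
      _ = C * r k - (C - 1) * β k := by rw [hβk]; ring
      _ ≤ C * r (k + 1) := by nlinarith [hβ k]
  refine ⟨C, fun k ↦ (le_total k N).elim (hinit k) fun hk ↦ ?_⟩
  induction k, hk using Nat.le_induction with
  | base => exact hinit N le_rfl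
  | succ k hk ih => exact hstep k hk ih

theorem stmt2_general (v : ℕ → ℝ)
    (a b s t : ℝ) (ha : 0 < a) (hb : 0 < b) (hs0 : 0 < s) (hs1 : s < 1) (hts : s < t)
    (α β : ℕ → ℝ)
    (hα : ∀ k, α k = a * ((k : ℝ) + 1) ^ (-s))
    (hβ : ∀ k, β k = b * ((k : ℝ) + 1) ^ (-t))
    (K : ℕ) (hrec : ∀ k, K ≤ k → v (k + 1) ≤ (1 - α k) * v k + β k) :
    ∃ C : ℝ, ∀ k, v k ≤ C * (β k / α k) := by
  have hratio (k : ℕ) : β k / α k = b / a * ((k : ℝ) + 1) ^ (s - t) := by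
    rw [hα, hβ, Real.rpow_sub (by positivity), Real.rpow_neg (by positivity),
      Real.rpow_neg (by positivity)]
    field_simp
  have hα_small : ∀ᶠ k in atTop, α k ≤ 1 := by
    have h := (tendsto_natCast_add_one_rpow_of_neg (neg_lt_zero.2 hs0)).const_mul a
    rw [mul_zero] at h
    filter_upwards [h.eventually_lt_const one_pos] with k hk
    exact (hα k).trans_le hk.le
  have hdecay : ∀ᶠ k in atTop, 2 * (β k / α k - β (k + 1) / α (k + 1)) ≤ β k := by
    have h := (tendsto_natCast_add_one_rpow_of_neg (sub_neg.2 hs1)).const_mul (2 * (t - s))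
    rw [mul_zero] at h
    filter_upwards [h.eventually_lt_const ha] with k hk
    rw [hratio, hratio, hβ]
    push_cast
    exact Real.two_mul_sub_rpow_add_one_le ha hb.le hts.le (by positivity) hk.le
  exact exists_le_mul_div_of_le_one_sub_mul_add (fun k ↦ by rw [hα]; positivity)
    (fun k ↦ by rw [hβ]; positivity) hα_small hdecay (eventually_atTop.2 ⟨K, hrec⟩)

/-- Chung-type decay lemma (Lemma 4 of the paper), with the polynomial rates
`α^k = a (k+1)^{-s}` and `β^k = b (k+1)^{-t}`, `0 < s < 1 < ∞`, `t > s`: a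
nonnegative sequence satisfying `v^{k+1} ≤ (1 − α^k) v^k + β^k` for all large `k`
satisfies `v^k ≤ C β^k / α^k` for all `k`, for some constant `C`. -/
theorem stmt2 (v : ℕ → ℝ) (hv : ∀ k, 0 ≤ v k)
    (a b s t : ℝ) (ha : 0 < a) (hb : 0 < b) (hs0 : 0 < s) (hs1 : s < 1) (hts : s < t)
    (α β : ℕ → ℝ)
    (hα : ∀ k, α k = a * ((k : ℝ) + 1) ^ (-s))
    (hβ : ∀ k, β k = b * ((k : ℝ) + 1) ^ (-t))
    (K : ℕ) (hrec : ∀ k, K ≤ k → v (k + 1) ≤ (1 - α k) * v k + β k) :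
    ∃ C : ℝ, ∀ k, v k ≤ C * (β k / α k) :=
  stmt2_general v a b s t ha hb hs0 hs1 hts α β hα hβ K hrec
end

section
/- Let {𝐯^k} ⊂ ℝ^d and {𝐮^k} ⊂ ℝ^p be adapted sequences of entrywise-nonnegative random vectors, {a^k} and {b^k} adapted nonnegative random scalar sequences with Σ_{k=0}^∞ a^k < ∞ and Σ_{k=0}^∞ b^k < ∞ almost surely, {V^k} an adapted sequence of entrywise-nonnegative random d×d matrices and {H^k} an adapted sequence of random d×p matrices. Suppose E[𝐯^{k+1} | 𝓕^k] ≤ (V^k + a^k 𝟏𝟏ᵀ) 𝐯^k + b^k 𝟏 − H^k 𝐮^k holds entrywise almost surely for all k ≥ 0, and there exists a deterministic vector π ∈ ℝ^d with all entries strictly positive such that πᵀ V^k ≤ πᵀ (entrywise) and πᵀ H^k ≥ 0 (entrywise) hold almost surely for all k ≥ 0. Then almost surely: (1) {πᵀ𝐯^k} converges to some nonnegative random variable; (2) the sequence {𝐯^k} is bounded; (3) Σ_{k=0}^∞ πᵀ H^k 𝐮^k < ∞. -/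
/-!
Pairing the recursion with `π` reduces it to the scalar Robbins–Siegmund inequality
`E[X (k+1) | 𝓕 k] ≤ (1 + C a k) X k + (∑ π) b k - Z k` for `X k = πᵀ v k`, `Z k = πᵀ H k u k` and
`C = (∑ π) (∑ 1 / π)`: `πᵀ V k ≤ πᵀ` absorbs the matrix term and `∑ v ≤ (∑ 1 / π) πᵀ v` the
rank-one term. For the scalar inequality, `X k / ∏ j < k, (1 + a j)` plus the discounted sum of
the `Z j - b j` is a supermartingale. It is not bounded below, so it is shifted by `N` and killed
once the partial sums of `b` exceed `N`; the result is a nonnegative supermartingale, integrable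
because `Z k ≤ (1 + a k) X k + b k` bounds it by `∑ j ≤ k, X j + N`, hence it converges almost
surely, and on `{∑ b ≤ N}` it is the uncut process plus `N`. Convergence of the discounted
process gives convergence of `X` and summability of `Z` pathwise, and `v` is bounded because
`πᵀ v` is and `π > 0`.
-/

open MeasureTheory Filter Topology Finset Matrix

namespace MeasureTheory

variable {Ω : Type*} {m m0 : MeasurableSpace Ω} {μ : Measure Ω}

theorem condExp_mul_add_le [IsFiniteMeasure μ] (hm : m ≤ m0) {c g X h : Ω → ℝ} {C : ℝ}
    (hc : StronglyMeasurable[m] c) (hc_nonneg : ∀ᵐ ω ∂μ, 0 ≤ c ω) (hcC : ∀ᵐ ω ∂μ, c ω ≤ C)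
    (hg : StronglyMeasurable[m] g) (hX : Integrable X μ) (hf : Integrable (c * X + g) μ)
    (hXh : μ[X|m] ≤ᵐ[μ] h) :
    μ[c * X + g|m] ≤ᵐ[μ] c * h + g := by
  have hc_norm : ∀ᵐ ω ∂μ, ‖c ω‖ ≤ C := by
    filter_upwards [hc_nonneg, hcC] with ω h₀ h₁
    rwa [Real.norm_of_nonneg h₀]
  have hcX : Integrable (c * X) μ := hX.bdd_mul (hc.mono hm).aestronglyMeasurable hc_norm
  have hgi : Integrable g μ := by simpa using hf.sub hcX
  filter_upwards [condExp_add hcX hgi m, condExp_stronglyMeasurable_mul_of_bound hm hc hX C hc_norm,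
    hc_nonneg, hXh] with ω h_add h_mul hcω hXω
  rw [h_add, Pi.add_apply, h_mul, condExp_of_stronglyMeasurable hm hg hgi]
  exact add_le_add_left (mul_le_mul_of_nonneg_left hXω hcω) _

theorem Supermartingale.exists_ae_tendsto_of_nonneg [IsFiniteMeasure μ] {𝓕 : Filtration ℕ m0}
    {f : ℕ → Ω → ℝ} (hf : Supermartingale f 𝓕 μ) (hf_nonneg : ∀ n, 0 ≤ᵐ[μ] f n) :
    ∀ᵐ ω ∂μ, ∃ c, Tendsto (fun n => f n ω) atTop (𝓝 c) := by
  have hbdd (n : ℕ) : eLpNorm ((-f) n) 1 μ ≤ (∫ ω, f 0 ω ∂μ).toNNReal := by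
    rw [Pi.neg_apply, eLpNorm_neg, eLpNorm_one_eq_lintegral_enorm,
      ← ofReal_integral_norm_eq_lintegral_enorm (hf.integrable n)]
    refine ENNReal.ofReal_le_ofReal ?_
    rw [integral_congr_ae ((hf_nonneg n).mono fun ω hω => Real.norm_of_nonneg hω)]
    simpa using hf.setIntegral_le n.zero_le MeasurableSet.univ
  filter_upwards [hf.neg.exists_ae_tendsto_of_bdd hbdd] with ω ⟨c, hc⟩
  exact ⟨-c, by simpa using hc.neg⟩

end MeasureTheory

namespace RobbinsSiegmund

noncomputable def discount (a : ℕ → ℝ) (k : ℕ) : ℝ := (∏ j ∈ range k, (1 + a j))⁻¹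

noncomputable def compensated (a b X Z : ℕ → ℝ) (k : ℕ) : ℝ :=
  discount a k * X k + ∑ j ∈ range k, discount a (j + 1) * (Z j - b j)

section Pathwise

variable {a b X Z : ℕ → ℝ}

lemma one_le_prod_one_add (ha : ∀ j, 0 ≤ a j) (k : ℕ) : 1 ≤ ∏ j ∈ range k, (1 + a j) :=
  Finset.one_le_prod fun j _ => le_add_of_nonneg_right (ha j)

lemma discount_pos (ha : ∀ j, 0 ≤ a j) (k : ℕ) : 0 < discount a k :=
  inv_pos.2 (zero_lt_one.trans_le (one_le_prod_one_add ha k))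

lemma discount_le_one (ha : ∀ j, 0 ≤ a j) (k : ℕ) : discount a k ≤ 1 :=
  inv_le_one_of_one_le₀ (one_le_prod_one_add ha k)

lemma prod_one_add_mul_discount (ha : ∀ j, 0 ≤ a j) (k : ℕ) :
    (∏ j ∈ range k, (1 + a j)) * discount a k = 1 :=
  mul_inv_cancel₀ (zero_lt_one.trans_le (one_le_prod_one_add ha k)).ne'

lemma prod_one_add_le_tprod (ha : ∀ j, 0 ≤ a j) (hsa : Summable a) (k : ℕ) :
    ∏ j ∈ range k, (1 + a j) ≤ ∏' j, (1 + a j) := by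
  refine Monotone.ge_of_tendsto (monotone_nat_of_le_succ fun n => ?_)
    (Real.multipliable_one_add_of_summable hsa).hasProd.tendsto_prod_nat k
  rw [prod_range_succ]
  exact le_mul_of_one_le_right (zero_le_one.trans (one_le_prod_one_add ha n))
    (le_add_of_nonneg_right (ha n))

lemma discount_succ_mul {k : ℕ} (hk : 1 + a k ≠ 0) :
    discount a (k + 1) * (1 + a k) = discount a k := by
  rw [discount, discount, prod_range_succ, mul_inv, mul_assoc, inv_mul_cancel₀ hk, mul_one]

lemma compensated_eq {k : ℕ} (hk : 1 + a k ≠ 0) :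
    compensated a b X Z k = discount a (k + 1) * ((1 + a k) * X k + b k - Z k)
      + ∑ j ∈ range (k + 1), discount a (j + 1) * (Z j - b j) := by
  rw [compensated, sum_range_succ, ← discount_succ_mul hk]
  ring

lemma compensated_le (ha : ∀ j, 0 ≤ a j) (hX : ∀ j, 0 ≤ X j)
    (hZ : ∀ j, Z j ≤ (1 + a j) * X j + b j) (k : ℕ) :
    compensated a b X Z k ≤ ∑ j ∈ range (k + 1), X j := by
  have hterm (j : ℕ) : discount a (j + 1) * (Z j - b j) ≤ X j := calc
    discount a (j + 1) * (Z j - b j) ≤ discount a (j + 1) * ((1 + a j) * X j) :=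
      mul_le_mul_of_nonneg_left (by linarith [hZ j]) (discount_pos ha _).le
    _ = discount a j * X j := by rw [← mul_assoc, discount_succ_mul (by linarith [ha j])]
    _ ≤ X j := mul_le_of_le_one_left (hX j) (discount_le_one ha j)
  rw [sum_range_succ, add_comm, compensated]
  exact add_le_add (mul_le_of_le_one_left (hX k) (discount_le_one ha k))
    (sum_le_sum fun j _ => hterm j)

lemma neg_sum_le_compensated (ha : ∀ j, 0 ≤ a j) (hb : ∀ j, 0 ≤ b j) (hX : ∀ j, 0 ≤ X j)
    (hZ : ∀ j, 0 ≤ Z j) (k : ℕ) :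
    -∑ j ∈ range k, b j ≤ compensated a b X Z k := by
  have hterm (j : ℕ) : -b j ≤ discount a (j + 1) * (Z j - b j) := by
    nlinarith [discount_pos ha (j + 1), discount_le_one ha (j + 1), hb j, hZ j]
  rw [compensated, ← sum_neg_distrib]
  exact le_add_of_nonneg_of_le (mul_nonneg (discount_pos ha k).le (hX k))
    (sum_le_sum fun j _ => hterm j)

theorem tendsto_and_summable_of_tendsto_compensated (ha : ∀ j, 0 ≤ a j) (hb : ∀ j, 0 ≤ b j)
    (hX : ∀ j, 0 ≤ X j) (hZ : ∀ j, 0 ≤ Z j) (hsa : Summable a) (hsb : Summable b) {L : ℝ}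
    (hL : Tendsto (compensated a b X Z) atTop (𝓝 L)) :
    (∃ c, 0 ≤ c ∧ Tendsto X atTop (𝓝 c)) ∧ Summable Z := by
  set P := ∏' j, (1 + a j)
  have hP : Tendsto (fun k => ∏ j ∈ range k, (1 + a j)) atTop (𝓝 P) :=
    (Real.multipliable_one_add_of_summable hsa).hasProd.tendsto_prod_nat
  have hP_nonneg : 0 ≤ P := zero_le_one.trans <|
    (one_le_prod_one_add ha 0).trans (prod_one_add_le_tprod ha hsa 0)
  have hdb : Summable fun j => discount a (j + 1) * b j :=
    hsb.of_nonneg_of_le (fun j => mul_nonneg (discount_pos ha _).le (hb j))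
      fun j => mul_le_of_le_one_left (hb j) (discount_le_one ha _)
  set D := fun k => ∑ j ∈ range k, discount a (j + 1) * Z j
  have hT : Tendsto (fun k => discount a k * X k + D k) atTop
      (𝓝 (L + ∑' j, discount a (j + 1) * b j)) := by
    refine (hL.add hdb.hasSum.tendsto_sum_nat).congr fun k => ?_
    simp only [compensated, D, mul_sub, sum_sub_distrib]
    ring
  obtain ⟨M, hM⟩ := hT.bddAbove_range
  have hdZ : Summable fun j => discount a (j + 1) * Z j :=
    summable_of_sum_range_le (fun j => mul_nonneg (discount_pos ha _).le (hZ j)) fun k =>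
      (le_add_of_nonneg_left (mul_nonneg (discount_pos ha k).le (hX k))).trans (hM ⟨k, rfl⟩)
  have hdX : Tendsto (fun k => discount a k * X k) atTop
      (𝓝 (L + ∑' j, discount a (j + 1) * b j - ∑' j, discount a (j + 1) * Z j)) :=
    (hT.sub hdZ.hasSum.tendsto_sum_nat).congr fun k => add_sub_cancel_right _ _
  have h_undiscount (k : ℕ) (x : ℝ) : (∏ j ∈ range k, (1 + a j)) * (discount a k * x) = x := by
    rw [← mul_assoc, prod_one_add_mul_discount ha, one_mul]
  refine ⟨⟨_, mul_nonneg hP_nonneg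
    (ge_of_tendsto' hdX fun k => mul_nonneg (discount_pos ha k).le (hX k)),
    (hP.mul hdX).congr fun k => h_undiscount k (X k)⟩, ?_⟩
  refine (hdZ.mul_left P).of_nonneg_of_le hZ fun j => ?_
  calc Z j = (∏ i ∈ range (j + 1), (1 + a i)) * (discount a (j + 1) * Z j) :=
        (h_undiscount (j + 1) (Z j)).symm
    _ ≤ P * (discount a (j + 1) * Z j) :=
        mul_le_mul_of_nonneg_right (prod_one_add_le_tprod ha hsa _)
          (mul_nonneg (discount_pos ha _).le (hZ j))

end Pathwise

section Localization

variable {Ω : Type*} {m0 : MeasurableSpace Ω} {μ : Measure Ω} {𝓕 : Filtration ℕ m0}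
  {a b X Z : ℕ → Ω → ℝ}

def budgetSet (b : ℕ → Ω → ℝ) (N k : ℕ) : Set Ω :=
  {ω | ∀ j ≤ k, ∑ i ∈ range j, b i ω ≤ N}

noncomputable def localized (a b X Z : ℕ → Ω → ℝ) (N k : ℕ) : Ω → ℝ :=
  (budgetSet b N k).indicator fun ω => compensated (a · ω) (b · ω) (X · ω) (Z · ω) k + N

structure PathwiseBounds (a b X Z : ℕ → ℝ) : Prop where
  a_nonneg : ∀ k, 0 ≤ a k
  b_nonneg : ∀ k, 0 ≤ b k
  X_nonneg : ∀ k, 0 ≤ X k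
  Z_nonneg : ∀ k, 0 ≤ Z k
  Z_le : ∀ k, Z k ≤ (1 + a k) * X k + b k

lemma measurable_discount (ha : Adapted 𝓕 a) {j k : ℕ} (hj : j ≤ k + 1) :
    Measurable[𝓕 k] fun ω => discount (a · ω) j :=
  (Finset.measurable_prod _ fun i hi => measurable_const.add
    (ha.measurable_le (by rw [mem_range] at hi; omega))).inv

lemma measurable_sum_discount_mul (ha : Adapted 𝓕 a) {f : ℕ → Ω → ℝ} (hf : Adapted 𝓕 f)
    {j k : ℕ} (hj : j ≤ k + 1) :
    Measurable[𝓕 k] fun ω => ∑ i ∈ range j, discount (a · ω) (i + 1) * f i ω :=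
  Finset.measurable_sum _ fun i hi => by
    rw [mem_range] at hi
    exact (measurable_discount ha (by omega)).mul (hf.measurable_le (by omega))

lemma measurableSet_budgetSet (hb : Adapted 𝓕 b) (N : ℕ) {j k : ℕ} (hj : j ≤ k + 1) :
    MeasurableSet[𝓕 k] (budgetSet b N j) := by
  simp only [budgetSet, Set.ofPred_forall]
  refine MeasurableSet.iInter fun i => MeasurableSet.iInter fun hi =>
    measurableSet_le (Finset.measurable_sum _ fun l hl => hb.measurable_le ?_) measurable_const
  rw [mem_range] at hl
  omega

lemma localized_succ_eq (N k : ℕ) :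
    localized a b X Z N (k + 1) =
      (budgetSet b N (k + 1)).indicator (fun ω => discount (a · ω) (k + 1)) * X (k + 1) +
      (budgetSet b N (k + 1)).indicator fun ω =>
        ∑ j ∈ range (k + 1), discount (a · ω) (j + 1) * (Z j ω - b j ω) + N := by
  ext ω
  by_cases hω : ω ∈ budgetSet b N (k + 1) <;> simp [localized, compensated, hω, add_assoc]

lemma stronglyAdapted_localized (ha : Adapted 𝓕 a) (hb : Adapted 𝓕 b) (hX : Adapted 𝓕 X)
    (hZ : Adapted 𝓕 Z) (N : ℕ) : StronglyAdapted 𝓕 (localized a b X Z N) := fun k =>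
  (Measurable.indicator ((((measurable_discount ha k.le_succ).mul (hX k)).add
    (measurable_sum_discount_mul ha (hZ.sub hb) le_self_add)).add_const _)
    (measurableSet_budgetSet hb N k.le_succ)).stronglyMeasurable

lemma localized_nonneg {ω : Ω} (ha : ∀ k, 0 ≤ a k ω) (hb : ∀ k, 0 ≤ b k ω)
    (hX : ∀ k, 0 ≤ X k ω) (hZ : ∀ k, 0 ≤ Z k ω) (N k : ℕ) : 0 ≤ localized a b X Z N k ω :=
  Set.indicator_apply_nonneg fun hω => by
    linarith [neg_sum_le_compensated ha hb hX hZ k, hω k le_rfl]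

lemma localized_le {ω : Ω} (ha : ∀ k, 0 ≤ a k ω) (hX : ∀ k, 0 ≤ X k ω)
    (hZ : ∀ k, Z k ω ≤ (1 + a k ω) * X k ω + b k ω) (N k : ℕ) :
    localized a b X Z N k ω ≤ ∑ j ∈ range (k + 1), X j ω + N :=
  Set.indicator_apply_le' (fun _ => by linarith [compensated_le ha hX hZ k])
    fun _ => add_nonneg (sum_nonneg fun j _ => hX j) N.cast_nonneg

lemma integrable_localized [IsFiniteMeasure μ] (ha : Adapted 𝓕 a) (hb : Adapted 𝓕 b)
    (hX : Adapted 𝓕 X) (hZ : Adapted 𝓕 Z) (hXi : ∀ k, Integrable (X k) μ)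
    (hpath : ∀ᵐ ω ∂μ, PathwiseBounds (a · ω) (b · ω) (X · ω) (Z · ω)) (N k : ℕ) :
    Integrable (localized a b X Z N k) μ := by
  refine Integrable.mono' (g := fun ω => ∑ j ∈ range (k + 1), X j ω + N)
    ((integrable_finsetSum _ fun j _ => hXi j).add (integrable_const _))
    ((stronglyAdapted_localized ha hb hX hZ N k).mono (𝓕.le k)).aestronglyMeasurable ?_
  filter_upwards [hpath] with ω h
  rw [Real.norm_eq_abs, abs_of_nonneg
    (localized_nonneg h.a_nonneg h.b_nonneg h.X_nonneg h.Z_nonneg N k)]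
  exact localized_le h.a_nonneg h.X_nonneg h.Z_le N k

lemma condExp_localized_succ_le [IsFiniteMeasure μ] (ha : Adapted 𝓕 a) (hb : Adapted 𝓕 b)
    (hX : Adapted 𝓕 X) (hZ : Adapted 𝓕 Z) (hXi : ∀ k, Integrable (X k) μ)
    (hpath : ∀ᵐ ω ∂μ, PathwiseBounds (a · ω) (b · ω) (X · ω) (Z · ω))
    (hrec : ∀ k, ∀ᵐ ω ∂μ, μ[X (k + 1)|𝓕 k] ω ≤ (1 + a k ω) * X k ω + b k ω - Z k ω)
    (N k : ℕ) :
    μ[localized a b X Z N (k + 1)|𝓕 k] ≤ᵐ[μ] localized a b X Z N k := by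
  set G := budgetSet b N (k + 1)
  have hG : MeasurableSet[𝓕 k] G := measurableSet_budgetSet hb N le_rfl
  have hstep := condExp_mul_add_le (𝓕.le k) (C := 1)
    ((measurable_discount ha le_rfl).indicator hG).stronglyMeasurable
    (hpath.mono fun ω h => Set.indicator_apply_nonneg fun _ => (discount_pos h.a_nonneg _).le)
    (hpath.mono fun ω h =>
      Set.indicator_apply_le' (fun _ => discount_le_one h.a_nonneg _) fun _ => zero_le_one)
    (((measurable_sum_discount_mul ha (hZ.sub hb) le_rfl).add_const _).indicator
      hG).stronglyMeasurable
    (hXi (k + 1)) (localized_succ_eq (a := a) (X := X) (Z := Z) N k ▸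
      integrable_localized ha hb hX hZ hXi hpath N (k + 1)) (hrec k)
  rw [localized_succ_eq]
  filter_upwards [hstep, hpath] with ω hω h
  refine hω.trans ?_
  by_cases hωG : ω ∈ G
  · have hωk : ω ∈ budgetSet b N k := fun j hj => hωG j (hj.trans k.le_succ)
    simp only [Pi.add_apply, Pi.mul_apply, Pi.sub_apply, Set.indicator_of_mem hωG, localized,
      Set.indicator_of_mem hωk]
    rw [compensated_eq (a := (a · ω)) (k := k) (by linarith [h.a_nonneg k])]
    exact (add_assoc ..).ge
  · simp only [Pi.add_apply, Pi.mul_apply, Set.indicator_of_notMem hωG, zero_mul, add_zero]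
    exact localized_nonneg h.a_nonneg h.b_nonneg h.X_nonneg h.Z_nonneg N k

end Localization

end RobbinsSiegmund

open RobbinsSiegmund in
theorem robbins_siegmund {Ω : Type*} {m0 : MeasurableSpace Ω} {μ : Measure Ω}
    [IsFiniteMeasure μ] {𝓕 : Filtration ℕ m0} {a b X Z : ℕ → Ω → ℝ}
    (ha : Adapted 𝓕 a) (hb : Adapted 𝓕 b) (hX : Adapted 𝓕 X) (hZ : Adapted 𝓕 Z)
    (hXi : ∀ k, Integrable (X k) μ)
    (ha_nonneg : ∀ k, ∀ᵐ ω ∂μ, 0 ≤ a k ω) (hb_nonneg : ∀ k, ∀ᵐ ω ∂μ, 0 ≤ b k ω)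
    (hX_nonneg : ∀ k, ∀ᵐ ω ∂μ, 0 ≤ X k ω) (hZ_nonneg : ∀ k, ∀ᵐ ω ∂μ, 0 ≤ Z k ω)
    (ha_sum : ∀ᵐ ω ∂μ, Summable fun k => a k ω) (hb_sum : ∀ᵐ ω ∂μ, Summable fun k => b k ω)
    (hrec : ∀ k, ∀ᵐ ω ∂μ, μ[X (k + 1)|𝓕 k] ω ≤ (1 + a k ω) * X k ω + b k ω - Z k ω) :
    ∀ᵐ ω ∂μ, (∃ c, 0 ≤ c ∧ Tendsto (fun k => X k ω) atTop (𝓝 c)) ∧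
      Summable fun k => Z k ω := by
  have hZ_le (k : ℕ) : ∀ᵐ ω ∂μ, Z k ω ≤ (1 + a k ω) * X k ω + b k ω := by
    filter_upwards [condExp_nonneg (m := 𝓕 k) (hX_nonneg (k + 1)), hrec k, hZ_nonneg k]
      with ω h_nonneg h_rec h_Z
    linarith [show (0 : ℝ) ≤ μ[X (k + 1)|𝓕 k] ω from h_nonneg]
  have hpath : ∀ᵐ ω ∂μ, PathwiseBounds (a · ω) (b · ω) (X · ω) (Z · ω) := by
    filter_upwards [ae_all_iff.2 ha_nonneg, ae_all_iff.2 hb_nonneg, ae_all_iff.2 hX_nonneg,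
      ae_all_iff.2 hZ_nonneg, ae_all_iff.2 hZ_le] with ω h₁ h₂ h₃ h₄ h₅
    exact ⟨h₁, h₂, h₃, h₄, h₅⟩
  have hconv : ∀ᵐ ω ∂μ, ∀ N : ℕ, ∃ L, Tendsto (fun k => localized a b X Z N k ω) atTop (𝓝 L) :=
    ae_all_iff.2 fun N => Supermartingale.exists_ae_tendsto_of_nonneg
      (supermartingale_nat (stronglyAdapted_localized ha hb hX hZ N)
        (integrable_localized ha hb hX hZ hXi hpath N)
        (condExp_localized_succ_le ha hb hX hZ hXi hpath hrec N))
      fun k => hpath.mono fun ω h =>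
        localized_nonneg h.a_nonneg h.b_nonneg h.X_nonneg h.Z_nonneg N k
  filter_upwards [hpath, hconv, ha_sum, hb_sum] with ω h h_conv h_sa h_sb
  obtain ⟨N, hN⟩ := exists_nat_ge (∑' k, b k ω)
  have hmem (k : ℕ) : ω ∈ budgetSet b N k := fun j _ =>
    (h_sb.sum_le_tsum _ fun i _ => h.b_nonneg i).trans hN
  obtain ⟨L, hL⟩ := h_conv N
  refine tendsto_and_summable_of_tendsto_compensated h.a_nonneg h.b_nonneg h.X_nonneg
    h.Z_nonneg h_sa h_sb (L := L - N) ((hL.sub_const N).congr fun k => ?_)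
  simp [localized, Set.indicator_of_mem (hmem k)]

section DotProduct

variable {Ω ι κ : Type*} [Fintype ι] [Fintype κ]

lemma sum_le_sum_inv_mul_dotProduct {π x : ι → ℝ} (hπ : ∀ i, 0 < π i) (hx : ∀ i, 0 ≤ x i) :
    ∑ i, x i ≤ (∑ i, (π i)⁻¹) * (π ⬝ᵥ x) := by
  rw [sum_mul]
  refine sum_le_sum fun i _ => ?_
  rw [le_inv_mul_iff₀ (hπ i)]
  exact single_le_sum (f := fun j => π j * x j) (fun j _ => mul_nonneg (hπ j).le (hx j))
    (mem_univ i)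

lemma dotProduct_le_of_le_mulVec {π x y : ι → ℝ} {w : κ → ℝ} {V : Matrix ι ι ℝ} {H : Matrix ι κ ℝ}
    {α β : ℝ} (hπ : ∀ i, 0 < π i) (hx : ∀ i, 0 ≤ x i) (hα : 0 ≤ α)
    (hπV : ∀ j, (π ᵥ* V) j ≤ π j)
    (hy : ∀ i, y i ≤ (V *ᵥ x) i + α * ∑ j, x j + β - (H *ᵥ w) i) :
    π ⬝ᵥ y ≤ (1 + (∑ i, π i) * (∑ i, (π i)⁻¹) * α) * (π ⬝ᵥ x) + (∑ i, π i) * β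
      - π ⬝ᵥ (H *ᵥ w) := calc
  π ⬝ᵥ y ≤ ∑ i, π i * ((V *ᵥ x) i + α * ∑ j, x j + β - (H *ᵥ w) i) :=
      sum_le_sum fun i _ => mul_le_mul_of_nonneg_left (hy i) (hπ i).le
  _ = (π ᵥ* V) ⬝ᵥ x + (∑ i, π i) * (α * ∑ j, x j) + (∑ i, π i) * β - π ⬝ᵥ (H *ᵥ w) := by
      rw [← dotProduct_mulVec]
      simp only [dotProduct, mul_add, mul_sub, sum_add_distrib, sum_sub_distrib, sum_mul]
  _ ≤ π ⬝ᵥ x + (∑ i, π i) * (α * ((∑ i, (π i)⁻¹) * (π ⬝ᵥ x))) + (∑ i, π i) * β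
      - π ⬝ᵥ (H *ᵥ w) := by
      gcongr
      · exact dotProduct_le_dotProduct_of_nonneg_right hπV fun i => hx i
      · exact sum_nonneg fun i _ => (hπ i).le
      · exact sum_le_sum_inv_mul_dotProduct hπ hx
  _ = _ := by ring

lemma adapted_dotProduct {m0 : MeasurableSpace Ω} {T : Type*} [Preorder T] {𝓕 : Filtration T m0}
    {v : T → Ω → ι → ℝ} (hv : Adapted 𝓕 v) (π : ι → ℝ) :
    Adapted 𝓕 fun k ω => π ⬝ᵥ v k ω := fun k =>
  Finset.measurable_sum _ fun i _ => measurable_const.mul ((measurable_pi_apply i).comp (hv k))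

lemma adapted_dotProduct_mulVec {m0 : MeasurableSpace Ω} {T : Type*} [Preorder T]
    {𝓕 : Filtration T m0} {H : T → Ω → Matrix ι κ ℝ} {u : T → Ω → κ → ℝ}
    (hH : ∀ i j, Adapted 𝓕 fun k ω => H k ω i j) (hu : Adapted 𝓕 u) (π : ι → ℝ) :
    Adapted 𝓕 fun k ω => π ⬝ᵥ (H k ω *ᵥ u k ω) := fun k => by
  simp only [dotProduct, mulVec]
  exact Finset.measurable_sum _ fun i _ => measurable_const.mul
    (Finset.measurable_sum _ fun j _ => (hH i j k).mul ((measurable_pi_apply j).comp (hu k)))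

lemma condExp_dotProduct {m m0 : MeasurableSpace Ω} {μ : Measure Ω} (π : ι → ℝ)
    {f : Ω → ι → ℝ} (hf : ∀ i, Integrable (fun ω => f ω i) μ) :
    μ[fun ω => π ⬝ᵥ f ω|m] =ᵐ[μ] fun ω => π ⬝ᵥ fun i => μ[fun ω' => f ω' i|m] ω := by
  have h_eq : (fun ω => π ⬝ᵥ f ω) = ∑ i, π i • fun ω => f ω i := by
    ext ω
    simp [dotProduct]
  rw [h_eq]
  filter_upwards [condExp_finsetSum (s := univ) (fun i _ => (hf i).smul (π i)) m,
    ae_all_iff.2 fun i => condExp_smul (μ := μ) (π i) (fun ω => f ω i) m] with ω h_sum h_smul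
  simp only [h_sum, Finset.sum_apply, h_smul, Pi.smul_apply, smul_eq_mul, dotProduct]

end DotProduct

theorem stmt3_general {d p : ℕ}
    {Ω : Type*} {m0 : MeasurableSpace Ω} {μ : Measure Ω} [IsProbabilityMeasure μ]
    (𝓕 : Filtration ℕ m0)
    (v : ℕ → Ω → Fin d → ℝ) (u : ℕ → Ω → Fin p → ℝ)
    (a b : ℕ → Ω → ℝ)
    (V : ℕ → Ω → Matrix (Fin d) (Fin d) ℝ)
    (H : ℕ → Ω → Matrix (Fin d) (Fin p) ℝ)
    (hv_adapted : Adapted 𝓕 v) (hu_adapted : Adapted 𝓕 u)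
    (ha_adapted : Adapted 𝓕 a) (hb_adapted : Adapted 𝓕 b)
    (hH_adapted : ∀ i j, Adapted 𝓕 (fun k ω => H k ω i j))
    (hv_int : ∀ k i, Integrable (fun ω => v k ω i) μ)
    (hv_nonneg : ∀ k, ∀ᵐ ω ∂μ, ∀ i, 0 ≤ v k ω i)
    (hu_nonneg : ∀ k, ∀ᵐ ω ∂μ, ∀ i, 0 ≤ u k ω i)
    (ha_nonneg : ∀ k, ∀ᵐ ω ∂μ, 0 ≤ a k ω)
    (hb_nonneg : ∀ k, ∀ᵐ ω ∂μ, 0 ≤ b k ω)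
    (ha_sum : ∀ᵐ ω ∂μ, Summable (fun k => a k ω))
    (hb_sum : ∀ᵐ ω ∂μ, Summable (fun k => b k ω))
    (π : Fin d → ℝ) (hπ : ∀ i, 0 < π i)
    (hπV : ∀ k, ∀ᵐ ω ∂μ, ∀ j, Matrix.vecMul π (V k ω) j ≤ π j)
    (hπH : ∀ k, ∀ᵐ ω ∂μ, ∀ j, 0 ≤ Matrix.vecMul π (H k ω) j)
    (hrec : ∀ k i, ∀ᵐ ω ∂μ,
      (μ[(fun ω' => v (k+1) ω' i) | 𝓕 k]) ω ≤
        (V k ω).mulVec (v k ω) i + a k ω * (∑ j, v k ω j) + b k ω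
          - (H k ω).mulVec (u k ω) i) :
    ∀ᵐ ω ∂μ,
      (∃ c : ℝ, 0 ≤ c ∧ Tendsto (fun k => ∑ i, π i * v k ω i) atTop (𝓝 c)) ∧
      (∃ M : ℝ, ∀ k i, v k ω i ≤ M) ∧
      Summable (fun k => ∑ i, π i * (H k ω).mulVec (u k ω) i) := by
  have hπ_sum : 0 ≤ ∑ i, π i := sum_nonneg fun i _ => (hπ i).le
  have hπ_inv : 0 ≤ ∑ i, (π i)⁻¹ := sum_nonneg fun i _ => (inv_pos.2 (hπ i)).le
  have hrec_dot (k : ℕ) : ∀ᵐ ω ∂μ, μ[fun ω => π ⬝ᵥ v (k + 1) ω|𝓕 k] ω ≤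
      (1 + (∑ i, π i) * (∑ i, (π i)⁻¹) * a k ω) * π ⬝ᵥ v k ω + (∑ i, π i) * b k ω
        - π ⬝ᵥ (H k ω *ᵥ u k ω) := by
    filter_upwards [condExp_dotProduct π (hv_int (k + 1)), ae_all_iff.2 (hrec k), hv_nonneg k,
      ha_nonneg k, hπV k] with ω h_cond h_rec h_v h_a h_πV
    rw [h_cond]
    exact dotProduct_le_of_le_mulVec hπ h_v h_a h_πV h_rec
  have hRS := robbins_siegmund (fun k => (ha_adapted k).const_mul _)
    (fun k => (hb_adapted k).const_mul _) (adapted_dotProduct hv_adapted π)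
    (adapted_dotProduct_mulVec hH_adapted hu_adapted π)
    (fun k => integrable_finsetSum _ fun i _ => (hv_int k i).const_mul (π i))
    (fun k => (ha_nonneg k).mono fun ω h => mul_nonneg (mul_nonneg hπ_sum hπ_inv) h)
    (fun k => (hb_nonneg k).mono fun ω h => mul_nonneg hπ_sum h)
    (fun k => (hv_nonneg k).mono fun ω h => dotProduct_nonneg_of_nonneg (fun i => (hπ i).le) h)
    (fun k => ((hu_nonneg k).and (hπH k)).mono fun ω h => by
      rw [dotProduct_mulVec]
      exact dotProduct_nonneg_of_nonneg h.2 h.1)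
    (ha_sum.mono fun ω h => h.mul_left _) (hb_sum.mono fun ω h => h.mul_left _) hrec_dot
  filter_upwards [hRS, ae_all_iff.2 hv_nonneg] with ω ⟨h_conv, h_sum⟩ h_v
  obtain ⟨M, hM⟩ := h_conv.choose_spec.2.bddAbove_range
  refine ⟨h_conv, ⟨(∑ i, (π i)⁻¹) * M, fun k i => ?_⟩, h_sum⟩
  exact (single_le_sum (fun j _ => h_v k j) (mem_univ i)).trans
    ((sum_le_sum_inv_mul_dotProduct hπ (h_v k)).trans
      (mul_le_mul_of_nonneg_left (hM ⟨k, rfl⟩) hπ_inv))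

/-- Vector-valued martingale convergence theorem (Lemma 5 of the paper).
Vector and matrix inequalities are entrywise. -/
theorem stmt3 {d p : ℕ}
    {Ω : Type*} {m0 : MeasurableSpace Ω} {μ : Measure Ω} [IsProbabilityMeasure μ]
    (𝓕 : Filtration ℕ m0)
    (v : ℕ → Ω → Fin d → ℝ) (u : ℕ → Ω → Fin p → ℝ)
    (a b : ℕ → Ω → ℝ)
    (V : ℕ → Ω → Matrix (Fin d) (Fin d) ℝ)
    (H : ℕ → Ω → Matrix (Fin d) (Fin p) ℝ)
    (hv_adapted : Adapted 𝓕 v) (hu_adapted : Adapted 𝓕 u)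
    (ha_adapted : Adapted 𝓕 a) (hb_adapted : Adapted 𝓕 b)
    (hV_adapted : ∀ i j, Adapted 𝓕 (fun k ω => V k ω i j))
    (hH_adapted : ∀ i j, Adapted 𝓕 (fun k ω => H k ω i j))
    (hv_int : ∀ k i, Integrable (fun ω => v k ω i) μ)
    (hv_nonneg : ∀ k, ∀ᵐ ω ∂μ, ∀ i, 0 ≤ v k ω i)
    (hu_nonneg : ∀ k, ∀ᵐ ω ∂μ, ∀ i, 0 ≤ u k ω i)
    (ha_nonneg : ∀ k, ∀ᵐ ω ∂μ, 0 ≤ a k ω)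
    (hb_nonneg : ∀ k, ∀ᵐ ω ∂μ, 0 ≤ b k ω)
    (hV_nonneg : ∀ k, ∀ᵐ ω ∂μ, ∀ i j, 0 ≤ V k ω i j)
    (ha_sum : ∀ᵐ ω ∂μ, Summable (fun k => a k ω))
    (hb_sum : ∀ᵐ ω ∂μ, Summable (fun k => b k ω))
    (π : Fin d → ℝ) (hπ : ∀ i, 0 < π i)
    (hπV : ∀ k, ∀ᵐ ω ∂μ, ∀ j, Matrix.vecMul π (V k ω) j ≤ π j)
    (hπH : ∀ k, ∀ᵐ ω ∂μ, ∀ j, 0 ≤ Matrix.vecMul π (H k ω) j)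
    (hrec : ∀ k i, ∀ᵐ ω ∂μ,
      (μ[(fun ω' => v (k+1) ω' i) | 𝓕 k]) ω ≤
        (V k ω).mulVec (v k ω) i + a k ω * (∑ j, v k ω j) + b k ω
          - (H k ω).mulVec (u k ω) i) :
    ∀ᵐ ω ∂μ,
      (∃ c : ℝ, 0 ≤ c ∧ Tendsto (fun k => ∑ i, π i * v k ω i) atTop (𝓝 c)) ∧
      (∃ M : ℝ, ∀ k i, v k ω i ≤ M) ∧
      Summable (fun k => ∑ i, π i * (H k ω).mulVec (u k ω) i) :=
  stmt3_general 𝓕 v u a b V H hv_adapted hu_adapted ha_adapted hb_adapted hH_adapted hv_int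
    hv_nonneg hu_nonneg ha_nonneg hb_nonneg ha_sum hb_sum π hπ hπV hπH hrec
end

section
/- Let {𝐯^k} ⊂ ℝ^d be an adapted sequence of entrywise-nonnegative random vectors and {b^k} an adapted sequence of nonnegative random scalars with Σ_{k=0}^∞ b^k < ∞ almost surely, such that E[𝐯^{k+1} | 𝓕^k] ≤ V^k 𝐯^k + b^k 𝟏 holds entrywise almost surely for all k ≥ 0, where {V^k} is an adapted sequence of entrywise-nonnegative random d×d matrices. Assume there exist a deterministic vector π ∈ ℝ^d with all entries strictly positive and a deterministic scalar sequence {a^k} with a^k ∈ (0,1) and Σ_{k=0}^∞ a^k = ∞ such that πᵀ V^k ≤ (1 − a^k) πᵀ (entrywise) holds almost surely for all k ≥ 0. Then lim_{k→∞} 𝐯^k = 0 almost surely. -/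
open MeasureTheory Filter Topology

/-!
For `y k = π ⬝ᵥ v k`, pairing the recursion with `π` gives the scalar inequality
`E[y (k+1) | 𝓕 k] ≤ y k - a k * y k + (∑ i, π i) * b k`. This is the setting of the
Robbins–Siegmund theorem: `y k + ∑_{j<k} a j * y j - ∑_{j<k} b j` is a supermartingale, which
becomes a nonnegative one after being killed once the (predictable) partial sums of `b` exceed a
level `M`. Hence, almost surely, `y k` converges and `∑ a k * y k < ∞`; as `∑ a k = ∞`, the limit
is `0`, and `0 ≤ π i * v k i ≤ y k` gives the claim coordinatewise.
-/

open Finset Matrix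

theorem summable_and_tendsto_of_tendsto_add_sum_range {y c : ℕ → ℝ} {L : ℝ}
    (hy : ∀ k, 0 ≤ y k) (hc : ∀ k, 0 ≤ c k)
    (h : Tendsto (fun k => y k + ∑ j ∈ range k, c j) atTop (𝓝 L)) :
    Summable c ∧ Tendsto y atTop (𝓝 (L - ∑' k, c k)) := by
  obtain ⟨C, hC⟩ := h.bddAbove_range
  have hc_sum : Summable c :=
    summable_of_sum_range_le hc fun k => by
      linarith [hy k, hC ⟨k, rfl⟩]
  refine ⟨hc_sum, ?_⟩
  simpa using h.sub hc_sum.hasSum.tendsto_sum_nat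

theorem summable_of_summable_mul_of_tendsto {a y : ℕ → ℝ} {L : ℝ} (hL : L ≠ 0)
    (hy : Tendsto y atTop (𝓝 L)) (hay : Summable fun k => a k * y k) : Summable a := by
  have hL' : 0 < |L| := abs_pos.2 hL
  refine Summable.of_norm_bounded_eventually (hay.abs.mul_left (2 / |L|)) ?_
  rw [Nat.cofinite_eq_atTop]
  filter_upwards [hy.abs.eventually (eventually_gt_nhds (half_lt_self hL'))] with k hk
  have h_one : 1 ≤ 2 / |L| * |y k| := by
    rw [div_mul_eq_mul_div, one_le_div hL']
    linarith
  calc ‖a k‖ = |a k| * 1 := by rw [Real.norm_eq_abs, mul_one]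
    _ ≤ |a k| * (2 / |L| * |y k|) := by gcongr
    _ = 2 / |L| * |a k * y k| := by rw [abs_mul]; ring

theorem MeasureTheory.Supermartingale.exists_ae_tendsto_of_nonneg_s5 {Ω : Type*}
    {m0 : MeasurableSpace Ω} {μ : Measure Ω} [IsFiniteMeasure μ] {𝓕 : Filtration ℕ m0}
    {f : ℕ → Ω → ℝ} (hf : Supermartingale f 𝓕 μ) (hf_nonneg : ∀ n, 0 ≤ᵐ[μ] f n) :
    ∀ᵐ ω ∂μ, ∃ c, Tendsto (fun n => f n ω) atTop (𝓝 c) := by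
  have hbdd : ∀ n, eLpNorm ((-f) n) 1 μ ≤ (∫ ω, f 0 ω ∂μ).toNNReal := by
    intro n
    rw [Pi.neg_apply, eLpNorm_neg, eLpNorm_one_eq_lintegral_enorm,
      ← ofReal_integral_norm_eq_lintegral_enorm (hf.integrable n)]
    refine ENNReal.ofReal_le_ofReal ?_
    calc ∫ ω, ‖f n ω‖ ∂μ = ∫ ω, f n ω ∂μ :=
          integral_congr_ae <| by
            filter_upwards [hf_nonneg n] with ω h using Real.norm_of_nonneg h
      _ ≤ ∫ ω, f 0 ω ∂μ := by
          simpa using hf.setIntegral_le n.zero_le MeasurableSet.univ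
  filter_upwards [hf.neg.exists_ae_tendsto_of_bdd hbdd] with ω ⟨c, hc⟩
  exact ⟨-c, by simpa using hc.neg⟩

section RobbinsSiegmund

variable {Ω : Type*} {m0 : MeasurableSpace Ω} {μ : Measure Ω} {𝓕 : Filtration ℕ m0}
  {y c b : ℕ → Ω → ℝ}

theorem MeasureTheory.Adapted.measurable_sum_range (hb : Adapted 𝓕 b) {k n : ℕ}
    (hkn : k ≤ n + 1) : Measurable[𝓕 n] fun ω => ∑ j ∈ range k, b j ω :=
  Finset.measurable_fun_sum _ fun j hj => hb.measurable_le (by grind)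

/-- The event `∑_{j<k} b j ≤ M` is `𝓕 (k - 1)`-measurable, which is why this truncation keeps the
supermartingale property. -/
noncomputable def truncatedRobbinsSiegmund (y c b : ℕ → Ω → ℝ) (M : ℝ) (k : ℕ) : Ω → ℝ :=
  {ω | ∑ j ∈ range k, b j ω ≤ M}.indicator
    fun ω => y k ω + ∑ j ∈ range k, c j ω + (M - ∑ j ∈ range k, b j ω)

theorem stronglyAdapted_truncatedRobbinsSiegmund (hy : Adapted 𝓕 y) (hc : Adapted 𝓕 c)
    (hb : Adapted 𝓕 b) (M : ℝ) : StronglyAdapted 𝓕 (truncatedRobbinsSiegmund y c b M) := by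
  intro k
  have hS := hb.measurable_sum_range k.le_succ
  refine Measurable.stronglyMeasurable ?_
  exact (((hy k).add (hc.measurable_sum_range k.le_succ)).add (measurable_const.sub hS)).indicator
    (measurableSet_le hS measurable_const)

theorem truncatedRobbinsSiegmund_nonneg {ω : Ω} (hy : ∀ k, 0 ≤ y k ω) (hc : ∀ k, 0 ≤ c k ω)
    (M : ℝ) (k : ℕ) : 0 ≤ truncatedRobbinsSiegmund y c b M k ω := by
  refine Set.indicator_apply_nonneg fun (hω : _ ≤ M) => ?_
  have := sum_nonneg fun j (_ : j ∈ range k) => hc j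
  linarith [hy k]

theorem integrable_truncatedRobbinsSiegmund [IsFiniteMeasure μ] (hy : Adapted 𝓕 y)
    (hc : Adapted 𝓕 c) (hb : Adapted 𝓕 b) (hy_int : ∀ k, Integrable (y k) μ)
    (hc_int : ∀ k, Integrable (c k) μ) (hb_nonneg : ∀ᵐ ω ∂μ, ∀ k, 0 ≤ b k ω) (M : ℝ) (k : ℕ) :
    Integrable (truncatedRobbinsSiegmund y c b M k) μ := by
  have hP_int : Integrable (fun ω => ∑ j ∈ range k, c j ω) μ :=
    integrable_finsetSum _ fun j _ => hc_int j
  refine Integrable.mono' (((hy_int k).abs.add hP_int.abs).add (integrable_const |M|))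
    ((stronglyAdapted_truncatedRobbinsSiegmund hy hc hb M).stronglyMeasurable
      |>.aestronglyMeasurable) ?_
  filter_upwards [hb_nonneg] with ω hω
  have hS := sum_nonneg fun j (_ : j ∈ range k) => hω j
  simp only [truncatedRobbinsSiegmund, Set.indicator_apply, Set.mem_ofPred_eq, Pi.add_apply]
  split_ifs with hSM
  · rw [Real.norm_eq_abs]
    refine (abs_add_le _ _).trans (add_le_add (abs_add_le _ _) ?_)
    rw [abs_of_nonneg (sub_nonneg.2 hSM)]
    linarith [le_abs_self M]
  · rw [norm_zero]
    positivity

theorem condExp_truncatedRobbinsSiegmund_succ_le [IsFiniteMeasure μ] (hy : Adapted 𝓕 y)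
    (hc : Adapted 𝓕 c) (hb : Adapted 𝓕 b) (hy_int : ∀ k, Integrable (y k) μ)
    (hc_int : ∀ k, Integrable (c k) μ) (hy_nonneg : ∀ᵐ ω ∂μ, ∀ k, 0 ≤ y k ω)
    (hc_nonneg : ∀ᵐ ω ∂μ, ∀ k, 0 ≤ c k ω) (hb_nonneg : ∀ᵐ ω ∂μ, ∀ k, 0 ≤ b k ω)
    (hrec : ∀ k, ∀ᵐ ω ∂μ, μ[y (k + 1)|𝓕 k] ω ≤ y k ω - c k ω + b k ω) (M : ℝ) (k : ℕ) :
    μ[truncatedRobbinsSiegmund y c b M (k + 1)|𝓕 k] ≤ᵐ[μ] truncatedRobbinsSiegmund y c b M k := by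
  set A := {ω | ∑ j ∈ range (k + 1), b j ω ≤ M}
  have hA : MeasurableSet[𝓕 k] A :=
    measurableSet_le (hb.measurable_sum_range le_rfl) measurable_const
  set R := A.indicator fun ω => ∑ j ∈ range (k + 1), c j ω + (M - ∑ j ∈ range (k + 1), b j ω)
  have hsplit : truncatedRobbinsSiegmund y c b M (k + 1) = A.indicator (y (k + 1)) + R := by
    ext ω
    simp only [truncatedRobbinsSiegmund, R, Pi.add_apply, Set.indicator_apply, add_assoc]
    split_ifs <;> simp
  have hR_int : Integrable R μ := by
    have := (integrable_truncatedRobbinsSiegmund hy hc hb hy_int hc_int hb_nonneg M (k + 1)).sub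
      ((hy_int (k + 1)).indicator (𝓕.le k _ hA))
    rwa [hsplit, add_sub_cancel_left] at this
  have hR_meas : StronglyMeasurable[𝓕 k] R :=
    ((hc.measurable_sum_range le_rfl).add (measurable_const.sub
      (hb.measurable_sum_range le_rfl))).indicator hA |>.stronglyMeasurable
  have hcond : μ[truncatedRobbinsSiegmund y c b M (k + 1)|𝓕 k]
      =ᵐ[μ] A.indicator (μ[y (k + 1)|𝓕 k]) + R := by
    rw [hsplit]
    refine (condExp_add ((hy_int (k + 1)).indicator (𝓕.le k _ hA)) hR_int _).trans ?_
    rw [condExp_of_stronglyMeasurable (𝓕.le k) hR_meas hR_int]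
    exact (condExp_indicator (hy_int (k + 1)) hA).add EventuallyEq.rfl
  filter_upwards [hcond, hrec k, hy_nonneg, hc_nonneg, hb_nonneg] with ω hω hrecω hyω hcω hbω
  rw [hω]
  by_cases hωA : ω ∈ A
  · have hSk : ∑ j ∈ range k, b j ω ≤ M := by
      have : ∑ j ∈ range (k + 1), b j ω ≤ M := hωA
      rw [sum_range_succ] at this
      linarith [hbω k]
    simp only [Pi.add_apply, R, Set.indicator_of_mem hωA, truncatedRobbinsSiegmund,
      Set.indicator_apply, Set.mem_ofPred_eq, if_pos hSk, sum_range_succ]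
    linarith [hrecω]
  · simp only [Pi.add_apply, R, Set.indicator_of_notMem hωA, add_zero]
    exact truncatedRobbinsSiegmund_nonneg hyω hcω M k

theorem ae_summable_and_exists_tendsto_of_condExp_le [IsFiniteMeasure μ] (hy : Adapted 𝓕 y)
    (hc : Adapted 𝓕 c) (hb : Adapted 𝓕 b) (hy_int : ∀ k, Integrable (y k) μ)
    (hc_int : ∀ k, Integrable (c k) μ) (hy_nonneg : ∀ᵐ ω ∂μ, ∀ k, 0 ≤ y k ω)
    (hc_nonneg : ∀ᵐ ω ∂μ, ∀ k, 0 ≤ c k ω) (hb_nonneg : ∀ᵐ ω ∂μ, ∀ k, 0 ≤ b k ω)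
    (hrec : ∀ k, ∀ᵐ ω ∂μ, μ[y (k + 1)|𝓕 k] ω ≤ y k ω - c k ω + b k ω) :
    ∀ᵐ ω ∂μ, Summable (fun k => b k ω) →
      Summable (fun k => c k ω) ∧ ∃ L, Tendsto (fun k => y k ω) atTop (𝓝 L) := by
  have hconv : ∀ M : ℕ, ∀ᵐ ω ∂μ,
      ∃ L, Tendsto (fun k => truncatedRobbinsSiegmund y c b M k ω) atTop (𝓝 L) := fun M =>
    (supermartingale_nat (stronglyAdapted_truncatedRobbinsSiegmund hy hc hb M)
      (integrable_truncatedRobbinsSiegmund hy hc hb hy_int hc_int hb_nonneg M)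
      (condExp_truncatedRobbinsSiegmund_succ_le hy hc hb hy_int hc_int hy_nonneg hc_nonneg
        hb_nonneg hrec M)).exists_ae_tendsto_of_nonneg_s5 fun k => by
      filter_upwards [hy_nonneg, hc_nonneg] with ω hyω hcω
      exact truncatedRobbinsSiegmund_nonneg hyω hcω M k
  filter_upwards [ae_all_iff.2 hconv, hy_nonneg, hc_nonneg, hb_nonneg]
    with ω hconvω hyω hcω hbω hb_sum
  obtain ⟨M, hM⟩ := exists_nat_ge (∑' k, b k ω)
  obtain ⟨L, hL⟩ := hconvω M
  have hS : ∀ k, ∑ j ∈ range k, b j ω ≤ M := fun k =>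
    (hb_sum.sum_le_tsum _ fun j _ => hbω j).trans hM
  have hW : ∀ k, truncatedRobbinsSiegmund y c b M k ω
      = y k ω + ∑ j ∈ range k, c j ω + (M - ∑ j ∈ range k, b j ω) := fun k =>
    if_pos (hS k)
  have hyc : Tendsto (fun k => y k ω + ∑ j ∈ range k, c j ω) atTop
      (𝓝 (L - (M - ∑' k, b k ω))) := by
    simp only [hW] at hL
    simpa using hL.sub ((tendsto_const_nhds (x := (M : ℝ))).sub hb_sum.hasSum.tendsto_sum_nat)
  obtain ⟨hc_sum, hy_tendsto⟩ := summable_and_tendsto_of_tendsto_add_sum_range hyω hcω hyc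
  exact ⟨hc_sum, _, hy_tendsto⟩

end RobbinsSiegmund

theorem dotProduct_mulVec_le_of_vecMul_le {ι : Type*} [Fintype ι] {π v : ι → ℝ}
    {V : Matrix ι ι ℝ} {r : ℝ} (hv : 0 ≤ v) (hπV : ∀ j, vecMul π V j ≤ r * π j) :
    π ⬝ᵥ (V *ᵥ v) ≤ r * (π ⬝ᵥ v) := by
  rw [dotProduct_mulVec, ← smul_eq_mul, ← smul_dotProduct]
  exact dotProduct_le_dotProduct_of_nonneg_right hπV hv

theorem tendsto_zero_of_dotProduct_tendsto_zero {ι : Type*} [Fintype ι] {π : ι → ℝ}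
    {v : ℕ → ι → ℝ} (hπ : ∀ i, 0 < π i) (hv : ∀ k, 0 ≤ v k)
    (h : Tendsto (fun k => π ⬝ᵥ v k) atTop (𝓝 0)) (i : ι) :
    Tendsto (fun k => v k i) atTop (𝓝 0) := by
  have hle : ∀ k, v k i ≤ (π i)⁻¹ * (π ⬝ᵥ v k) := fun k => by
    rw [le_inv_mul_iff₀ (hπ i)]
    exact Finset.single_le_sum (f := fun j => π j * v k j)
      (fun j _ => mul_nonneg (hπ j).le (hv k j)) (mem_univ i)
  exact squeeze_zero (fun k => hv k i) hle (by simpa using h.const_mul (π i)⁻¹)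

theorem condExp_dotProduct_ae_eq {Ω ι : Type*} [Fintype ι] {m m0 : MeasurableSpace Ω}
    {μ : Measure Ω} (π : ι → ℝ) {f : Ω → ι → ℝ} (hf : ∀ i, Integrable (fun ω => f ω i) μ) :
    μ[fun ω => π ⬝ᵥ f ω|m] =ᵐ[μ] fun ω => π ⬝ᵥ fun i => μ[fun ω' => f ω' i|m] ω := by
  have hsum : (fun ω => π ⬝ᵥ f ω) = ∑ i, π i • fun ω => f ω i := by
    ext ω
    simp [dotProduct]
  rw [hsum]
  filter_upwards [condExp_finsetSum (s := univ) (fun i _ => (hf i).smul (π i)) m,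
    ae_all_iff.2 fun i => condExp_smul (μ := μ) (π i) (fun ω => f ω i) m] with ω hsumω hsmulω
  rw [hsumω, Finset.sum_apply]
  simp [hsmulω, dotProduct]

theorem condExp_dotProduct_le {Ω ι : Type*} [Fintype ι] {m m0 : MeasurableSpace Ω}
    {μ : Measure Ω} {π : ι → ℝ} {f g : Ω → ι → ℝ} {W : Ω → Matrix ι ι ℝ} {β : Ω → ℝ} {r : ℝ}
    (hπ : 0 ≤ π) (hf : ∀ i, Integrable (fun ω => f ω i) μ) (hg : ∀ᵐ ω ∂μ, 0 ≤ g ω)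
    (hπW : ∀ᵐ ω ∂μ, ∀ j, vecMul π (W ω) j ≤ r * π j)
    (hfg : ∀ i, ∀ᵐ ω ∂μ, μ[fun ω => f ω i|m] ω ≤ (W ω *ᵥ g ω) i + β ω) :
    ∀ᵐ ω ∂μ, μ[fun ω => π ⬝ᵥ f ω|m] ω ≤ r * (π ⬝ᵥ g ω) + (∑ i, π i) * β ω := by
  filter_upwards [condExp_dotProduct_ae_eq π hf, hg, hπW, ae_all_iff.2 hfg]
    with ω hω hgω hπWω hfgω
  calc μ[fun ω => π ⬝ᵥ f ω|m] ω = π ⬝ᵥ fun i => μ[fun ω' => f ω' i|m] ω := hω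
    _ ≤ π ⬝ᵥ (W ω *ᵥ g ω + fun _ => β ω) := dotProduct_le_dotProduct_of_nonneg_left hfgω hπ
    _ ≤ r * (π ⬝ᵥ g ω) + (∑ i, π i) * β ω := by
      rw [dotProduct_add]
      gcongr
      · exact dotProduct_mulVec_le_of_vecMul_le hgω hπWω
      · simp [dotProduct, sum_mul]

theorem stmt5_general {d : ℕ}
    {Ω : Type*} {m0 : MeasurableSpace Ω} {μ : Measure Ω} [IsProbabilityMeasure μ]
    (𝓕 : Filtration ℕ m0)
    (v : ℕ → Ω → Fin d → ℝ) (b : ℕ → Ω → ℝ)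
    (V : ℕ → Ω → Matrix (Fin d) (Fin d) ℝ)
    (hv_adapted : Adapted 𝓕 v) (hb_adapted : Adapted 𝓕 b)
    (hv_int : ∀ k i, Integrable (fun ω => v k ω i) μ)
    (hv_nonneg : ∀ k, ∀ᵐ ω ∂μ, ∀ i, 0 ≤ v k ω i)
    (hb_nonneg : ∀ k, ∀ᵐ ω ∂μ, 0 ≤ b k ω)
    (hb_sum : ∀ᵐ ω ∂μ, Summable (fun k => b k ω))
    (π : Fin d → ℝ) (hπ : ∀ i, 0 < π i)
    (a : ℕ → ℝ) (ha : ∀ k, a k ∈ Set.Ioo (0 : ℝ) 1) (ha_div : ¬ Summable a)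
    (hπV : ∀ k, ∀ᵐ ω ∂μ, ∀ j, Matrix.vecMul π (V k ω) j ≤ (1 - a k) * π j)
    (hrec : ∀ k i, ∀ᵐ ω ∂μ,
      (μ[(fun ω' => v (k+1) ω' i) | 𝓕 k]) ω ≤
        (V k ω).mulVec (v k ω) i + b k ω) :
    ∀ᵐ ω ∂μ, ∀ i, Tendsto (fun k => v k ω i) atTop (𝓝 (0 : ℝ)) := by
  set y : ℕ → Ω → ℝ := fun k ω => π ⬝ᵥ v k ω
  have hy : Adapted 𝓕 y := fun k =>
    (continuous_const.dotProduct continuous_id).measurable.comp (hv_adapted k)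
  have hy_int : ∀ k, Integrable (y k) μ := fun k => by
    simpa [y, dotProduct] using integrable_finsetSum _ fun i _ => (hv_int k i).const_mul (π i)
  have hy_nonneg : ∀ᵐ ω ∂μ, ∀ k, 0 ≤ y k ω := ae_all_iff.2 fun k =>
    (hv_nonneg k).mono fun ω hω => dotProduct_nonneg_of_nonneg (fun i => (hπ i).le) hω
  have hrec_y : ∀ k, ∀ᵐ ω ∂μ,
      μ[y (k + 1)|𝓕 k] ω ≤ y k ω - a k * y k ω + (∑ i, π i) * b k ω := fun k =>
    (condExp_dotProduct_le (fun i => (hπ i).le) (hv_int (k + 1)) (hv_nonneg k) (hπV k)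
      (hrec k)).mono fun ω hω => by linarith
  have hRS := ae_summable_and_exists_tendsto_of_condExp_le (c := fun k ω => a k * y k ω)
    hy (fun k => (hy k).const_mul _) (fun k => (hb_adapted k).const_mul _) hy_int
    (fun k => (hy_int k).const_mul _)
    hy_nonneg (hy_nonneg.mono fun ω hω k => mul_nonneg (ha k).1.le (hω k))
    ((ae_all_iff.2 hb_nonneg).mono fun ω hω k =>
      mul_nonneg (sum_nonneg fun i _ => (hπ i).le) (hω k)) hrec_y
  filter_upwards [hRS, hb_sum, ae_all_iff.2 hv_nonneg] with ω hRSω hbω hvω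
  obtain ⟨hay, L, hL⟩ := hRSω (hbω.mul_left _)
  obtain rfl : L = 0 := by
    by_contra hL0
    exact ha_div (summable_of_summable_mul_of_tendsto hL0 hL hay)
  exact tendsto_zero_of_dotProduct_tendsto_zero hπ hvω hL

/-- Lemma 7 of the paper: entrywise-nonnegative random vector sequences driven by
nonnegative random matrices with `πᵀ V^k ≤ (1 − a^k) πᵀ` converge to zero a.s. -/
theorem stmt5 {d : ℕ}
    {Ω : Type*} {m0 : MeasurableSpace Ω} {μ : Measure Ω} [IsProbabilityMeasure μ]
    (𝓕 : Filtration ℕ m0)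
    (v : ℕ → Ω → Fin d → ℝ) (b : ℕ → Ω → ℝ)
    (V : ℕ → Ω → Matrix (Fin d) (Fin d) ℝ)
    (hv_adapted : Adapted 𝓕 v) (hb_adapted : Adapted 𝓕 b)
    (hV_adapted : ∀ i j, Adapted 𝓕 (fun k ω => V k ω i j))
    (hv_int : ∀ k i, Integrable (fun ω => v k ω i) μ)
    (hv_nonneg : ∀ k, ∀ᵐ ω ∂μ, ∀ i, 0 ≤ v k ω i)
    (hb_nonneg : ∀ k, ∀ᵐ ω ∂μ, 0 ≤ b k ω)
    (hV_nonneg : ∀ k, ∀ᵐ ω ∂μ, ∀ i j, 0 ≤ V k ω i j)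
    (hb_sum : ∀ᵐ ω ∂μ, Summable (fun k => b k ω))
    (π : Fin d → ℝ) (hπ : ∀ i, 0 < π i)
    (a : ℕ → ℝ) (ha : ∀ k, a k ∈ Set.Ioo (0 : ℝ) 1) (ha_div : ¬ Summable a)
    (hπV : ∀ k, ∀ᵐ ω ∂μ, ∀ j, Matrix.vecMul π (V k ω) j ≤ (1 - a k) * π j)
    (hrec : ∀ k i, ∀ᵐ ω ∂μ,
      (μ[(fun ω' => v (k+1) ω' i) | 𝓕 k]) ω ≤
        (V k ω).mulVec (v k ω) i + b k ω) :
    ∀ᵐ ω ∂μ, ∀ i, Tendsto (fun k => v k ω i) atTop (𝓝 (0 : ℝ)) :=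
  stmt5_general 𝓕 v b V hv_adapted hb_adapted hv_int hv_nonneg hb_nonneg hb_sum π hπ a ha ha_div hπV
    hrec
end

section
/- Let f_1,…,f_m : ℝ^d → ℝ be differentiable with L-Lipschitz gradients and suppose F = (1/m)Σ_{i=1}^m f_i is convex. Then for any points x_1,…,x_m, θ* ∈ ℝ^d, any λ ≥ 0 and any γ > 0, setting x̄ = (1/m)Σ_{i=1}^m x_i, one has (2λ/m) Σ_{i=1}^m ⟨∇f_i(x_i), x̄ − θ*⟩ ≥ −(γ/m) Σ_{i=1}^m ‖x_i − x̄‖² − (L²λ²/γ) ‖x̄ − θ*‖² + 2λ (F(x̄) − F(θ*)). -/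
open RealInnerProductSpace

/-!
Write `∇f_i(x_i) = ∇f_i(x̄) + (∇f_i(x_i) - ∇f_i(x̄))`. The first parts average to `∇F(x̄)`, and the
first-order condition for the convex `F` gives `⟨∇F(x̄), x̄ - θ*⟩ ≥ F(x̄) - F(θ*)`. Each error term
is bounded below by Cauchy–Schwarz, the Lipschitz bound `‖∇f_i(x_i) - ∇f_i(x̄)‖ ≤ L‖x_i - x̄‖` and
Young's inequality `2ab ≤ γa² + b²/γ`.
-/

section Gradient

variable {E : Type*} [NormedAddCommGroup E] [InnerProductSpace ℝ E] [CompleteSpace E]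

theorem HasGradientAt.sum {ι : Type*} (s : Finset ι) {f : ι → E → ℝ} {g : ι → E} {x : E}
    (h : ∀ i ∈ s, HasGradientAt (f i) (g i) x) :
    HasGradientAt (fun z => ∑ i ∈ s, f i z) (∑ i ∈ s, g i) x := by
  rw [hasGradientAt_iff_hasFDerivAt, map_sum]
  exact HasFDerivAt.fun_sum fun i hi => hasGradientAt_iff_hasFDerivAt.mp (h i hi)

theorem HasGradientAt.const_mul {f : E → ℝ} {g x : E} (h : HasGradientAt f g x) (c : ℝ) :
    HasGradientAt (fun z => c * f z) (c • g) x := by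
  rw [hasGradientAt_iff_hasFDerivAt, map_smul]
  exact (hasGradientAt_iff_hasFDerivAt.mp h).const_mul c

theorem ConvexOn.inner_gradient_le_sub {s : Set E} {F : E → ℝ} {G x y : E}
    (hF : ConvexOn ℝ s F) (hx : x ∈ s) (hy : y ∈ s) (hG : HasGradientAt F G x) :
    ⟪G, y - x⟫ ≤ F y - F x := by
  set ℓ : ℝ →ᵃ[ℝ] E := AffineMap.lineMap x y
  have hline : ConvexOn ℝ (ℓ ⁻¹' s) (F ∘ ℓ) := hF.comp_affineMap ℓ
  have hderiv : HasDerivAt (F ∘ ℓ) ⟪G, y - x⟫ 0 := by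
    have hG' : HasFDerivAt F (InnerProductSpace.toDual ℝ E G) (ℓ 0) := by
      simpa [ℓ] using hasGradientAt_iff_hasFDerivAt.mp hG
    simpa using hG'.comp_hasDerivAt (0 : ℝ) AffineMap.hasDerivAt_lineMap
  simpa [slope_def_field, ℓ] using
    hline.le_slope_of_hasDerivAt (x := 0) (y := 1) (by simpa [ℓ] using hx) (by simpa [ℓ] using hy)
      zero_lt_one hderiv

end Gradient

theorem two_mul_inner_le_of_norm_sub_le {E : Type*} [NormedAddCommGroup E] [InnerProductSpace ℝ E]
    {a b v : E} {L r lam γ : ℝ} (hab : ‖a - b‖ ≤ L * r) (hlam : 0 ≤ lam) (hγ : 0 < γ) :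
    2 * lam * ⟪b, v⟫ - γ * r ^ 2 - L ^ 2 * lam ^ 2 / γ * ‖v‖ ^ 2 ≤ 2 * lam * ⟪a, v⟫ := by
  have hcs : -(‖a - b‖ * ‖v‖) ≤ ⟪a - b, v⟫ := neg_le_of_abs_le (abs_real_inner_le_norm _ _)
  have hyoung := two_mul_le_add_mul_sq (a := r) (b := L * lam * ‖v‖) hγ
  have hlip : lam * (‖a - b‖ * ‖v‖) ≤ lam * (L * r * ‖v‖) := by gcongr
  have hcoeff : L ^ 2 * lam ^ 2 / γ * ‖v‖ ^ 2 = γ⁻¹ * (L * lam * ‖v‖) ^ 2 := by ring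
  rw [inner_sub_left] at hcs
  nlinarith

theorem stmt9_general {d m : ℕ} (hm : 0 < m)
    (f : Fin m → EuclideanSpace ℝ (Fin d) → ℝ)
    (g : Fin m → EuclideanSpace ℝ (Fin d) → EuclideanSpace ℝ (Fin d))
    (L : ℝ)
    (hfg : ∀ i z, HasGradientAt (f i) (g i z) z)
    (hLip : ∀ i z w, ‖g i z - g i w‖ ≤ L * ‖z - w‖)
    (F : EuclideanSpace ℝ (Fin d) → ℝ)
    (hF : ∀ z, F z = (m : ℝ)⁻¹ * ∑ i, f i z)
    (hFconv : ConvexOn ℝ Set.univ F)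
    (x : Fin m → EuclideanSpace ℝ (Fin d)) (θ : EuclideanSpace ℝ (Fin d))
    (lam γ : ℝ) (hlam : 0 ≤ lam) (hγ : 0 < γ)
    (xbar : EuclideanSpace ℝ (Fin d)) :
    (2 * lam / m) * ∑ i, ⟪g i (x i), xbar - θ⟫ ≥
      -(γ / m) * ∑ i, ‖x i - xbar‖ ^ 2
        - (L ^ 2 * lam ^ 2 / γ) * ‖xbar - θ‖ ^ 2
        + 2 * lam * (F xbar - F θ) := by
  have hmR : (0 : ℝ) < m := by exact_mod_cast hm
  set G := (m : ℝ)⁻¹ • ∑ i, g i xbar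
  have hGrad : HasGradientAt F G xbar := by
    rw [funext hF]
    exact (HasGradientAt.sum _ fun i _ => hfg i xbar).const_mul _
  have hFirstOrder : F xbar - F θ ≤ ⟪G, xbar - θ⟫ := by
    have := hFconv.inner_gradient_le_sub trivial trivial hGrad (y := θ)
    rw [← neg_sub xbar θ, inner_neg_right] at this
    linarith
  have hSumGrad : ∑ i, ⟪g i xbar, xbar - θ⟫ = m * ⟪G, xbar - θ⟫ := by
    rw [real_inner_smul_left, sum_inner]
    field_simp
  have hLipschitzSum := Finset.sum_le_sum fun i (_ : i ∈ Finset.univ) =>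
    two_mul_inner_le_of_norm_sub_le (v := xbar - θ) (hLip i (x i) xbar) hlam hγ
  simp only [Finset.sum_sub_distrib, ← Finset.mul_sum, Finset.sum_const, Finset.card_univ,
    Fintype.card_fin, nsmul_eq_mul, hSumGrad] at hLipschitzSum
  have hConvexity : 2 * lam * (m * (F xbar - F θ)) ≤ 2 * lam * (m * ⟪G, xbar - θ⟫) := by
    gcongr
  calc -(γ / m) * ∑ i, ‖x i - xbar‖ ^ 2 - (L ^ 2 * lam ^ 2 / γ) * ‖xbar - θ‖ ^ 2
        + 2 * lam * (F xbar - F θ)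
      = (m : ℝ)⁻¹ * (2 * lam * (m * (F xbar - F θ)) - γ * ∑ i, ‖x i - xbar‖ ^ 2
          - L ^ 2 * lam ^ 2 / γ * (m * ‖xbar - θ‖ ^ 2)) := by
        field_simp
        ring
    _ ≤ (m : ℝ)⁻¹ * (2 * lam * ∑ i, ⟪g i (x i), xbar - θ⟫) := by gcongr; linarith
    _ = (2 * lam / m) * ∑ i, ⟪g i (x i), xbar - θ⟫ := by ring

/-- The inner-product estimate (eq. (25) of the paper): for convex `F = (1/m) Σ f_i`
with `L`-Lipschitz gradients,
`(2λ/m) Σ_i ⟨∇f_i(x_i), x̄ − θ*⟩ ≥ −(γ/m) Σ_i ‖x_i − x̄‖² − (L²λ²/γ)‖x̄ − θ*‖² + 2λ(F(x̄) − F(θ*))`. -/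
theorem stmt9 {d m : ℕ} (hm : 0 < m)
    (f : Fin m → EuclideanSpace ℝ (Fin d) → ℝ)
    (g : Fin m → EuclideanSpace ℝ (Fin d) → EuclideanSpace ℝ (Fin d))
    (L : ℝ)
    (hfg : ∀ i z, HasGradientAt (f i) (g i z) z)
    (hLip : ∀ i z w, ‖g i z - g i w‖ ≤ L * ‖z - w‖)
    (F : EuclideanSpace ℝ (Fin d) → ℝ)
    (hF : ∀ z, F z = (m : ℝ)⁻¹ * ∑ i, f i z)
    (hFconv : ConvexOn ℝ Set.univ F)
    (x : Fin m → EuclideanSpace ℝ (Fin d)) (θ : EuclideanSpace ℝ (Fin d))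
    (lam γ : ℝ) (hlam : 0 ≤ lam) (hγ : 0 < γ)
    (xbar : EuclideanSpace ℝ (Fin d)) (hxbar : xbar = (m : ℝ)⁻¹ • ∑ i, x i) :
    (2 * lam / m) * ∑ i, ⟪g i (x i), xbar - θ⟫ ≥
      -(γ / m) * ∑ i, ‖x i - xbar‖ ^ 2
        - (L ^ 2 * lam ^ 2 / γ) * ‖xbar - θ‖ ^ 2
        + 2 * lam * (F xbar - F θ) :=
  stmt9_general hm f g L hfg hLip F hF hFconv x θ lam γ hlam hγ xbar
end

section
/- Fix constants w̄ > 0 and C ≥ 0, deterministic sequences {γ^k} and {λ^k} with γ^k ∈ (0, 1/w̄] and λ^k ≥ 0, scalars ρ^k ∈ [0, 1 − w̄γ^k], and vectors e^k, d^k ∈ ℝ^d with e^0 = 0, ‖d^k‖₁ ≤ C, and e^{k+1} = ρ^k e^k − λ^k d^k for all k ≥ 0. Then for every k ≥ 1, ‖e^k‖₁ ≤ C ς^k, where ς^k = Σ_{p=1}^{k−1} (Π_{q=p}^{k−1} (1 − w̄γ^q)) λ^{p−1} + λ^{k−1}. (This is the sensitivity bound Δ^k ≤ C ς^k of Theorem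 2 for Algorithm 1: e^k plays the role of x_i^k − x_i'^k, the difference of agent i's iterates in two executions of Algorithm 1 on adjacent problems producing identical observations, ρ^k = 1 + w_{ii}γ^k with w̄ = min_i |w_{ii}|, and d^k = ∇f_i(x_i^k) − ∇f_i'(x_i'^k).) -/
/-!
The ℓ¹ error obeys `‖e^{k+1}‖ ≤ (1 - w̄γ^k) ‖e^k‖ + C λ^k`, so the discrete Grönwall inequality
(product form) bounds `‖e^k‖` by `C Σ_{p<k} λ^p Π_{q=p+1}^{k-1} (1 - w̄γ^q)`; shifting the
summation index by one turns this into `C ς^k`.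
-/

open Finset

theorem sum_Ico_one_prod_mul_pred_add_eq {R : Type*} [CommSemiring R] (c b : ℕ → R) (m : ℕ) :
    ∑ p ∈ Ico 1 (m + 1), (∏ q ∈ Ico p (m + 1), c q) * b (p - 1) + b m =
      ∑ p ∈ Ico 0 (m + 1), b p * ∏ q ∈ Ico (p + 1) (m + 1), c q := by
  rw [sum_Ico_succ_top (Nat.zero_le m), Ico_self, prod_empty, mul_one, ← zero_add 1,
    ← sum_Ico_add', zero_add]
  simp only [Nat.add_sub_cancel, mul_comm]

theorem norm_smul_sub_smul_le {E : Type*} [SeminormedAddCommGroup E] [NormedSpace ℝ E]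
    {a b : ℝ} (ha : 0 ≤ a) (hb : 0 ≤ b) (x y : E) :
    ‖a • x - b • y‖ ≤ a * ‖x‖ + b * ‖y‖ := by
  calc ‖a • x - b • y‖ ≤ ‖a • x‖ + ‖b • y‖ := norm_sub_le _ _
    _ = a * ‖x‖ + b * ‖y‖ := by
      rw [norm_smul, norm_smul, Real.norm_of_nonneg ha, Real.norm_of_nonneg hb]

theorem norm_le_of_eq_smul_sub_smul {E : Type*} [SeminormedAddCommGroup E] [NormedSpace ℝ E]
    (ρ c lam : ℕ → ℝ) (C : ℝ) (e d : ℕ → E) (he0 : e 0 = 0) (hd : ∀ k, ‖d k‖ ≤ C)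
    (hrec : ∀ k, e (k + 1) = ρ k • e k - lam k • d k)
    (hρ0 : ∀ k, 0 ≤ ρ k) (hρc : ∀ k, ρ k ≤ c k) (hlam : ∀ k, 0 ≤ lam k) (n : ℕ) :
    ‖e n‖ ≤ C * ∑ p ∈ Ico 0 n, lam p * ∏ q ∈ Ico (p + 1) n, c q := by
  have hstep : ∀ k ≥ 0, ‖e (k + 1)‖ ≤ c k * ‖e k‖ + C * lam k := fun k _ ↦
    calc ‖e (k + 1)‖ ≤ ρ k * ‖e k‖ + lam k * ‖d k‖ := by
          rw [hrec k]; exact norm_smul_sub_smul_le (hρ0 k) (hlam k) _ _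
      _ ≤ c k * ‖e k‖ + lam k * C := by
          have := hρc k; have := hd k; have := hlam k
          gcongr
      _ = c k * ‖e k‖ + C * lam k := by ring
  have hc : ∀ k ≥ 0, 0 ≤ c k := fun k _ ↦ (hρ0 k).trans (hρc k)
  calc ‖e n‖
      ≤ ‖e 0‖ * ∏ q ∈ Ico 0 n, c q + ∑ p ∈ Ico 0 n, C * lam p * ∏ q ∈ Ico (p + 1) n, c q :=
        discrete_gronwall_prod_general (u := fun k ↦ ‖e k‖) (b := fun k ↦ C * lam k)
          hstep hc (Nat.zero_le n)
    _ = C * ∑ p ∈ Ico 0 n, lam p * ∏ q ∈ Ico (p + 1) n, c q := by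
        simp only [he0, norm_zero, zero_mul, zero_add, mul_sum, mul_assoc]

theorem stmt13_general {d : ℕ} (wbar C : ℝ)
    (γ lam : ℕ → ℝ)
    (hlam : ∀ k, 0 ≤ lam k)
    (ρ : ℕ → ℝ) (hρ0 : ∀ k, 0 ≤ ρ k) (hρ1 : ∀ k, ρ k ≤ 1 - wbar * γ k)
    (e dv : ℕ → Fin d → ℝ)
    (he0 : e 0 = 0)
    (hd : ∀ k, ∑ i, |dv k i| ≤ C)
    (hrec : ∀ k, e (k+1) = ρ k • e k - lam k • dv k)
    (ς : ℕ → ℝ)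
    (hς : ∀ k, ς k =
      (∑ p ∈ Finset.Ico 1 k, (∏ q ∈ Finset.Ico p k, (1 - wbar * γ q)) * lam (p-1))
        + lam (k-1)) :
    ∀ k, 1 ≤ k → ∑ i, |e k i| ≤ C * ς k := by
  -- `Fin d → ℝ` carries the sup norm; the ℓ¹ norm is that of `PiLp 1`.
  have norm_toLp (x : Fin d → ℝ) : ‖WithLp.toLp 1 x‖ = ∑ i, |x i| := by
    simp only [PiLp.norm_eq_of_L1, Real.norm_eq_abs]
  intro k hk
  obtain ⟨m, rfl⟩ := Nat.exists_eq_add_of_le' hk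
  have hnorm := norm_le_of_eq_smul_sub_smul ρ (fun q ↦ 1 - wbar * γ q) lam C
    (fun k ↦ WithLp.toLp 1 (e k)) (fun k ↦ WithLp.toLp 1 (dv k))
    (by simp only [he0, WithLp.toLp_zero]) (fun k ↦ (norm_toLp _).trans_le (hd k))
    (fun k ↦ by simp only [hrec k, WithLp.toLp_sub, WithLp.toLp_smul]) hρ0 hρ1 hlam (m + 1)
  rw [norm_toLp, ← sum_Ico_one_prod_mul_pred_add_eq] at hnorm
  simpa only [hς, Nat.add_sub_cancel] using hnorm

/-- The finite-horizon sensitivity bound of Theorem 2 (Algorithm 1): if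
`e^0 = 0`, `‖d^k‖₁ ≤ C` and `e^{k+1} = ρ^k e^k − λ^k d^k` with
`0 ≤ ρ^k ≤ 1 − w̄γ^k`, then `‖e^k‖₁ ≤ C ς^k` for all `k ≥ 1`, where
`ς^k = Σ_{p=1}^{k−1} (Π_{q=p}^{k−1} (1 − w̄γ^q)) λ^{p−1} + λ^{k−1}`. -/
theorem stmt13 {d : ℕ} (wbar C : ℝ) (hwbar : 0 < wbar) (hC : 0 ≤ C)
    (γ lam : ℕ → ℝ)
    (hγ_pos : ∀ k, 0 < γ k) (hγ_le : ∀ k, γ k ≤ 1 / wbar)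
    (hlam : ∀ k, 0 ≤ lam k)
    (ρ : ℕ → ℝ) (hρ0 : ∀ k, 0 ≤ ρ k) (hρ1 : ∀ k, ρ k ≤ 1 - wbar * γ k)
    (e dv : ℕ → Fin d → ℝ)
    (he0 : e 0 = 0)
    (hd : ∀ k, ∑ i, |dv k i| ≤ C)
    (hrec : ∀ k, e (k+1) = ρ k • e k - lam k • dv k)
    (ς : ℕ → ℝ)
    (hς : ∀ k, ς k =
      (∑ p ∈ Finset.Ico 1 k, (∏ q ∈ Finset.Ico p k, (1 - wbar * γ q)) * lam (p-1))
        + lam (k-1)) :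
    ∀ k, 1 ≤ k → ∑ i, |e k i| ≤ C * ς k :=
  stmt13_general wbar C γ lam hlam ρ hρ0 hρ1 e dv he0 hd hrec ς hς
end

section
/- Fix w̄ > 0 and C ≥ 0, set γ^k = a(k+1)^{−s} and λ^k = b(k+1)^{−t} with a, b > 0, 0 < s < 1, t > s, and w̄γ^k ≤ 1 for all k. Let ρ^k ∈ [0, 1 − w̄γ^k] and let e^k, d^k ∈ ℝ^d satisfy e^0 = 0, ‖d^k‖₁ ≤ C γ^k, and e^{k+1} = ρ^k e^k − λ^k d^k for all k ≥ 0. Then there exists a constant C̄ such that ‖e^k‖₁ ≤ C̄ λ^k for all k ≥ 0; consequently, for any positive sequence {ν^k}, if Σ_{k=1}^∞ λ^k/ν^k < ∞ then Σ_{k=1}^∞ ‖e^k‖₁/ν^k < ∞. (This is the key estimate behind the finite cumulative privacy budget of Algorithm 1 over an infinite time horizon in Theorem 2: ‖e^k‖₁ is the sensitivity Δ^k of Algorithm 1 and ν^k the Laplace noise parameter.) -/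
/-!
Writing `L k = ‖e^k‖₁`, the recursion gives `L (k+1) ≤ ρ^k L k + C γ^k λ^k`. Since `s < 1`, the
relative decay `(λ^k - λ^{k+1}) / λ^k ≤ t / (k+1)` is eventually below `w̄ γ^k / 2`, so for
`c ≥ 2C / w̄` the contraction `ρ^k ≤ 1 - w̄ γ^k` propagates `L k ≤ c λ^k` from `k` to `k + 1`
once `k` is large; the finitely many earlier indices are absorbed by enlarging `c`. Summability
then follows by comparison.
-/

open Filter Finset

lemma one_sub_mul_le_one_add_rpow_neg {t u : ℝ} (ht : 0 ≤ t) (hu : -1 < u) :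
    1 - t * u ≤ (1 + u) ^ (-t) := by
  have hpos : 0 < 1 + u := by linarith
  have hlog : Real.log (1 + u) ≤ u := by linarith [Real.log_le_sub_one_of_pos hpos]
  calc 1 - t * u ≤ 1 + Real.log (1 + u) * (-t) := by nlinarith
    _ ≤ (1 + u) ^ (-t) := by
      rw [Real.rpow_def_of_pos hpos]; exact Real.add_one_le_exp _ |>.trans' (by linarith)

lemma rpow_neg_sub_rpow_neg_add_one_le {t x : ℝ} (ht : 0 ≤ t) (hx : 0 < x) :
    x ^ (-t) - (x + 1) ^ (-t) ≤ t / x * x ^ (-t) := by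
  have hfactor : (x + 1) ^ (-t) = x ^ (-t) * (1 + 1 / x) ^ (-t) := by
    rw [← Real.mul_rpow hx.le (by positivity)]
    congr 1
    field_simp
  have hbern : 1 - t / x ≤ (1 + 1 / x) ^ (-t) := by
    simpa only [mul_one_div] using
      one_sub_mul_le_one_add_rpow_neg ht (show -1 < 1 / x by linarith [one_div_pos.2 hx])
  have hxt : 0 < x ^ (-t) := Real.rpow_pos_of_pos hx _
  rw [hfactor]
  nlinarith [mul_le_mul_of_nonneg_left hbern hxt.le]

lemma eventually_div_le_mul_rpow_neg {s : ℝ} (hs : s < 1) {c : ℝ} (hc : 0 < c) (t : ℝ) :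
    ∀ᶠ x : ℝ in atTop, t / x ≤ c * x ^ (-s) := by
  filter_upwards [(tendsto_rpow_atTop (by linarith : 0 < 1 - s)).eventually_ge_atTop (t / c),
    eventually_gt_atTop 0] with x hx hx0
  have hpow : x ^ (1 - s) = x ^ (-s) * x := by
    rw [sub_eq_neg_add, Real.rpow_add hx0, Real.rpow_one]
  rw [div_le_iff₀ hx0, mul_assoc, ← hpow]
  rwa [div_le_iff₀' hc] at hx

lemma eventually_rpow_neg_sub_rpow_neg_add_one_le {a c s t : ℝ} (ha : 0 < a) (hc : 0 < c)
    (hs : s < 1) (ht : 0 ≤ t) :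
    ∀ᶠ x : ℝ in atTop, x ^ (-t) - (x + 1) ^ (-t) ≤ c * (a * x ^ (-s)) * x ^ (-t) := by
  filter_upwards [eventually_div_le_mul_rpow_neg hs (mul_pos hc ha) t, eventually_gt_atTop 0]
    with x hx hx0
  calc x ^ (-t) - (x + 1) ^ (-t) ≤ t / x * x ^ (-t) := rpow_neg_sub_rpow_neg_add_one_le ht hx0
    _ ≤ c * a * x ^ (-s) * x ^ (-t) := by gcongr
    _ = c * (a * x ^ (-s)) * x ^ (-t) := by ring

lemma sum_abs_smul_sub_smul_le {ι : Type*} [Fintype ι] (x y : ι → ℝ) {p q : ℝ}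
    (hp : 0 ≤ p) (hq : 0 ≤ q) :
    ∑ i, |(p • x - q • y) i| ≤ p * ∑ i, |x i| + q * ∑ i, |y i| := by
  calc ∑ i, |(p • x - q • y) i| ≤ ∑ i, (p * |x i| + q * |y i|) := by
        gcongr with i
        simpa [abs_mul, abs_of_nonneg hp, abs_of_nonneg hq] using abs_sub (p * x i) (q * y i)
    _ = p * ∑ i, |x i| + q * ∑ i, |y i| := by rw [sum_add_distrib, mul_sum, mul_sum]

lemma exists_forall_le_mul_of_le (f g : ℕ → ℝ) (hg : ∀ k, 0 < g k) (c₀ : ℝ) (K : ℕ) :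
    ∃ c, c₀ ≤ c ∧ ∀ k ≤ K, f k ≤ c * g k := by
  obtain ⟨M, hM⟩ := ((range (K + 1)).image fun k => f k / g k).exists_le
  refine ⟨max c₀ M, le_max_left _ _, fun k hk => ?_⟩
  have hkM : f k / g k ≤ M := hM _ (mem_image_of_mem _ (mem_range.2 (Nat.lt_succ_of_le hk)))
  rw [div_le_iff₀ (hg k)] at hkM
  exact hkM.trans (by gcongr; exacts [(hg k).le, le_max_right _ _])

theorem exists_forall_le_mul_of_le_mul_add {L ρ γ lam : ℕ → ℝ} {w C : ℝ} (hw : 0 < w)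
    (hC : 0 ≤ C) (hγ : ∀ k, 0 ≤ γ k) (hlam : ∀ k, 0 < lam k) (hρ0 : ∀ k, 0 ≤ ρ k)
    (hρ1 : ∀ k, ρ k ≤ 1 - w * γ k) (hL : ∀ k, L (k + 1) ≤ ρ k * L k + C * γ k * lam k)
    (hdecay : ∀ᶠ k in atTop, lam k - lam (k + 1) ≤ w / 2 * γ k * lam k) :
    ∃ c, ∀ k, L k ≤ c * lam k := by
  obtain ⟨K, hK⟩ := eventually_atTop.1 hdecay
  obtain ⟨c, hCc, hinit⟩ := exists_forall_le_mul_of_le L lam hlam (2 * C / w) K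
  have hc : 0 ≤ c := (by positivity : 0 ≤ 2 * C / w).trans hCc
  have hCc' : 2 * C ≤ w * c := by rwa [div_le_iff₀' hw] at hCc
  refine ⟨c, fun k => ?_⟩
  rcases le_total k K with hk | hk
  · exact hinit k hk
  induction k, hk using Nat.le_induction with
  | base => exact hinit K le_rfl
  | succ k hk ih =>
    have hγlam : 0 ≤ γ k * lam k := mul_nonneg (hγ k) (hlam k).le
    have hcontract : ρ k * (c * lam k) ≤ (1 - w * γ k) * (c * lam k) :=
      mul_le_mul_of_nonneg_right (hρ1 k) (mul_nonneg hc (hlam k).le)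
    have hforcing : C * (γ k * lam k) ≤ w * c / 2 * (γ k * lam k) :=
      mul_le_mul_of_nonneg_right (by linarith) hγlam
    have hih : ρ k * L k ≤ ρ k * (c * lam k) := mul_le_mul_of_nonneg_left ih (hρ0 k)
    calc L (k + 1) ≤ c * (lam k - w / 2 * γ k * lam k) := by linarith [hL k]
      _ ≤ c * lam (k + 1) := mul_le_mul_of_nonneg_left (by linarith [hK k hk]) hc

theorem stmt14_general {d : ℕ} (wbar C : ℝ) (hwbar : 0 < wbar) (hC : 0 ≤ C)
    (a b s t : ℝ) (ha : 0 < a) (hb : 0 < b) (hs0 : 0 < s) (hs1 : s < 1) (hts : s < t)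
    (γ lam : ℕ → ℝ)
    (hγ : ∀ k, γ k = a * ((k : ℝ) + 1) ^ (-s))
    (hlam : ∀ k, lam k = b * ((k : ℝ) + 1) ^ (-t))
    (ρ : ℕ → ℝ) (hρ0 : ∀ k, 0 ≤ ρ k) (hρ1 : ∀ k, ρ k ≤ 1 - wbar * γ k)
    (e dv : ℕ → Fin d → ℝ)
    (hd : ∀ k, ∑ i, |dv k i| ≤ C * γ k)
    (hrec : ∀ k, e (k+1) = ρ k • e k - lam k • dv k) :
    (∃ Cbar : ℝ, ∀ k, ∑ i, |e k i| ≤ Cbar * lam k) ∧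
    ∀ ν : ℕ → ℝ, (∀ k, 0 < ν k) → Summable (fun k => lam k / ν k) →
      Summable (fun k => (∑ i, |e k i|) / ν k) := by
  have hk1 (k : ℕ) : (0 : ℝ) < k + 1 := Nat.cast_add_one_pos k
  have hlam_pos (k : ℕ) : 0 < lam k := hlam k ▸ mul_pos hb (Real.rpow_pos_of_pos (hk1 k) _)
  have hγ_nonneg (k : ℕ) : 0 ≤ γ k := hγ k ▸ mul_nonneg ha.le (Real.rpow_nonneg (hk1 k).le _)
  have hnorm (k : ℕ) : ∑ i, |e (k + 1) i| ≤ ρ k * ∑ i, |e k i| + C * γ k * lam k := by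
    have hforcing := mul_le_mul_of_nonneg_left (hd k) (hlam_pos k).le
    rw [hrec k]
    linarith [sum_abs_smul_sub_smul_le (e k) (dv k) (hρ0 k) (hlam_pos k).le]
  have hdecay : ∀ᶠ k in atTop, lam k - lam (k + 1) ≤ wbar / 2 * γ k * lam k := by
    have hshift : Tendsto (fun k : ℕ => (k : ℝ) + 1) atTop atTop :=
      tendsto_atTop_add_const_right _ 1 tendsto_natCast_atTop_atTop
    filter_upwards [hshift.eventually (eventually_rpow_neg_sub_rpow_neg_add_one_le ha
      (half_pos hwbar) hs1 (hs0.trans hts).le)] with k hk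
    rw [hγ, hlam, hlam, Nat.cast_succ]
    nlinarith [mul_le_mul_of_nonneg_left hk hb.le]
  obtain ⟨Cbar, hCbar⟩ :=
    exists_forall_le_mul_of_le_mul_add (L := fun k => ∑ i, |e k i|) hwbar hC hγ_nonneg hlam_pos hρ0 hρ1 hnorm hdecay
  refine ⟨⟨Cbar, hCbar⟩, fun ν hν hsum => ?_⟩
  refine (hsum.mul_left Cbar).of_nonneg_of_le
    (fun k => div_nonneg (sum_nonneg fun i _ => abs_nonneg _) (hν k).le) fun k => ?_
  rw [mul_div_assoc']
  exact div_le_div_of_nonneg_right (hCbar k) (hν k).le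

/-- The infinite-horizon sensitivity estimate of Theorem 2 (Algorithm 1): with
polynomially decaying `γ^k = a(k+1)^{−s}`, `λ^k = b(k+1)^{−t}` (`0 < s < 1`,
`t > s`), if `e^0 = 0`, `‖d^k‖₁ ≤ C γ^k` and `e^{k+1} = ρ^k e^k − λ^k d^k` with
`0 ≤ ρ^k ≤ 1 − w̄γ^k`, then `‖e^k‖₁ ≤ C̄ λ^k` for some constant `C̄`; hence
summability of `λ^k/ν^k` implies summability of `‖e^k‖₁/ν^k`. -/
theorem stmt14 {d : ℕ} (wbar C : ℝ) (hwbar : 0 < wbar) (hC : 0 ≤ C)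
    (a b s t : ℝ) (ha : 0 < a) (hb : 0 < b) (hs0 : 0 < s) (hs1 : s < 1) (hts : s < t)
    (γ lam : ℕ → ℝ)
    (hγ : ∀ k, γ k = a * ((k : ℝ) + 1) ^ (-s))
    (hlam : ∀ k, lam k = b * ((k : ℝ) + 1) ^ (-t))
    (hwγ : ∀ k, wbar * γ k ≤ 1)
    (ρ : ℕ → ℝ) (hρ0 : ∀ k, 0 ≤ ρ k) (hρ1 : ∀ k, ρ k ≤ 1 - wbar * γ k)
    (e dv : ℕ → Fin d → ℝ)
    (he0 : e 0 = 0)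
    (hd : ∀ k, ∑ i, |dv k i| ≤ C * γ k)
    (hrec : ∀ k, e (k+1) = ρ k • e k - lam k • dv k) :
    (∃ Cbar : ℝ, ∀ k, ∑ i, |e k i| ≤ Cbar * lam k) ∧
    ∀ ν : ℕ → ℝ, (∀ k, 0 < ν k) → Summable (fun k => lam k / ν k) →
      Summable (fun k => (∑ i, |e k i|) / ν k) :=
  stmt14_general wbar C hwbar hC a b s t ha hb hs0 hs1 hts γ lam hγ hlam ρ hρ0 hρ1 e dv hd hrec
end

section
/- Let {e^k} ⊂ ℝ^d be an adapted random sequence with E[‖e^0‖²] < ∞, and let {n^k} be random vectors in ℝ^d with E[n^k | 𝓕^k] = 0 and E[‖n^k‖² | 𝓕^k] ≤ (s^k)² almost surely, where {s^k} is deterministic. Let {α^k} be a deterministic sequence with α^k ∈ (0,1] and Σ_{k=0}^∞ α^k = ∞, and let {γ₂^k} be a deterministic nonnegative sequence with Σ_{k=0}^∞ (γ₂^k)² (s^k)² < ∞. If e^{k+1} = (1 − α^k) e^k + γ₂^k n^k for all k ≥ 0, then almost surely lim_{k→∞} e^k = 0 and Σ_{k=0}^∞ α^k ‖e^k‖² <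 ∞. (In the analysis of Algorithm 2, e^k = ȳ^k − ḡ^k is the gradient-tracking error between the average auxiliary variable and the average gradient, and n^k is the averaged injected noise.) -/
/-!
The squared error `V k = ‖e k‖ ^ 2` satisfies
`E[V (k+1) | 𝓕 k] ≤ (1 - α k) V k + (γ₂ k)² (s k)²`: the cross term `⟪e k, n k⟫` has vanishing
conditional expectation and `(1 - α k)² ≤ 1 - α k`. Hence (Robbins–Siegmund)
`V k + ∑_{j<k} α j V j + ∑_{j≥k} (γ₂ j)² (s j)²` is a nonnegative supermartingale, so it converges
almost surely. Along such a path `∑ α k V k < ∞` and `V k` converges, and the limit is `0`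
because `∑ α k = ∞`.
-/

open MeasureTheory Filter Topology Finset
open scoped InnerProductSpace

section ConditionalPythagoras

variable {Ω E : Type*} {m m0 : MeasurableSpace Ω} {μ : Measure Ω}
  [NormedAddCommGroup E] [InnerProductSpace ℝ E]

lemma MeasureTheory.MemLp.integrable_inner {x y : Ω → E} (hx : MemLp x 2 μ) (hy : MemLp y 2 μ) :
    Integrable (fun ω => ⟪x ω, y ω⟫_ℝ) μ := by
  rw [← memLp_one_iff_integrable]
  exact hx.of_bilin (fun a b => ⟪a, b⟫_ℝ) 1 hy (hx.1.inner hy.1)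
    (ae_of_all _ fun ω => by simpa using nnnorm_inner_le_nnnorm (𝕜 := ℝ) (x ω) (y ω))

variable [CompleteSpace E] [IsFiniteMeasure μ]

theorem condExp_norm_add_sq_of_condExp_eq_zero (hm : m ≤ m0) {x ξ : Ω → E}
    (hx : StronglyMeasurable[m] x) (hx2 : MemLp x 2 μ) (hξ2 : MemLp ξ 2 μ)
    (hξ : μ[ξ|m] =ᵐ[μ] 0) :
    μ[fun ω => ‖x ω + ξ ω‖ ^ 2|m] =ᵐ[μ] fun ω => ‖x ω‖ ^ 2 + μ[fun ω => ‖ξ ω‖ ^ 2|m] ω := by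
  have hxx := (memLp_two_iff_integrable_sq_norm hx2.1).1 hx2
  have hξξ := (memLp_two_iff_integrable_sq_norm hξ2.1).1 hξ2
  have hxξ := hx2.integrable_inner hξ2
  have h_pull : μ[fun ω => ⟪x ω, ξ ω⟫_ℝ|m] =ᵐ[μ] fun ω => ⟪x ω, μ[ξ|m] ω⟫_ℝ :=
    condExp_bilin_of_stronglyMeasurable_left (innerSL ℝ) hx hxξ (hξ2.integrable one_le_two)
  have h_cross : μ[fun ω => ⟪x ω, ξ ω⟫_ℝ|m] =ᵐ[μ] 0 := by
    filter_upwards [h_pull, hξ] with ω h h0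
    simp [h, h0]
  have h_expand : (fun ω => ‖x ω + ξ ω‖ ^ 2)
      = (fun ω => ‖x ω‖ ^ 2) + (2 : ℝ) • (fun ω => ⟪x ω, ξ ω⟫_ℝ) + fun ω => ‖ξ ω‖ ^ 2 := by
    ext ω; simp [norm_add_sq_real]
  have h_sq : μ[fun ω => ‖x ω‖ ^ 2|m] = fun ω => ‖x ω‖ ^ 2 :=
    condExp_of_stronglyMeasurable hm (hx.norm.pow 2) hxx
  rw [h_expand]
  filter_upwards [condExp_add (hxx.add (hxξ.smul (2 : ℝ))) hξξ m,
    condExp_add hxx (hxξ.smul (2 : ℝ)) m, condExp_smul (μ := μ) (m := m) (2 : ℝ) (fun ω => ⟪x ω, ξ ω⟫_ℝ), h_cross] with ω h₁ h₂ h₃ h₄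
  simp [h₁, h₂, h₃, h₄, h_sq]

theorem condExp_norm_sq_le_of_eq_smul_add_smul (hm : m ≤ m0) {x y ξ : Ω → E} {a b σ : ℝ}
    (ha : 0 ≤ a) (ha1 : a ≤ 1) (hx : StronglyMeasurable[m] x) (hx2 : MemLp x 2 μ)
    (hy2 : MemLp y 2 μ) (hy : ∀ ω, y ω = (1 - a) • x ω + b • ξ ω) (hξ : μ[ξ|m] =ᵐ[μ] 0)
    (hξ_var : ∀ᵐ ω ∂μ, μ[fun ω => ‖ξ ω‖ ^ 2|m] ω ≤ σ ^ 2) :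
    μ[fun ω => ‖y ω‖ ^ 2|m] ≤ᵐ[μ] fun ω => (1 - a) * ‖x ω‖ ^ 2 + b ^ 2 * σ ^ 2 := by
  have hbξ2 : MemLp (fun ω => b • ξ ω) 2 μ := by
    have : (fun ω => b • ξ ω) = y - (1 - a) • x := by ext ω; simp [hy]
    exact this ▸ hy2.sub (hx2.const_smul _)
  have hbξ : μ[fun ω => b • ξ ω|m] =ᵐ[μ] 0 := by
    change μ[b • ξ|m] =ᵐ[μ] 0
    filter_upwards [condExp_smul (μ := μ) (m := m) b ξ, hξ] with ω h h0
    simp [h, h0]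
  have hbξ_var : μ[fun ω => ‖b • ξ ω‖ ^ 2|m] =ᵐ[μ] b ^ 2 • μ[fun ω => ‖ξ ω‖ ^ 2|m] := by
    simp_rw [norm_smul, mul_pow, Real.norm_eq_abs, sq_abs]
    exact condExp_smul (μ := μ) (m := m) (b ^ 2) fun ω => ‖ξ ω‖ ^ 2
  simp_rw [hy]
  filter_upwards [condExp_norm_add_sq_of_condExp_eq_zero (x := fun ω => (1 - a) • x ω) hm
    (hx.const_smul (1 - a)) (hx2.const_smul _) hbξ2 hbξ, hbξ_var, hξ_var] with ω h_pyth h_var h_le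
  rw [h_pyth, h_var, Pi.smul_apply, smul_eq_mul, norm_smul, mul_pow, Real.norm_eq_abs, sq_abs]
  have h_contract : (1 - a) ^ 2 ≤ 1 - a := by nlinarith
  gcongr

end ConditionalPythagoras

lemma tendsto_and_summable_of_tendsto_add_sum {v a : ℕ → ℝ} (hv : ∀ k, 0 ≤ v k)
    (ha : ∀ k, 0 ≤ a k) {c : ℝ}
    (h : Tendsto (fun k => v k + ∑ j ∈ range k, a j * v j) atTop (𝓝 c)) :
    (∃ L, Tendsto v atTop (𝓝 L)) ∧ Summable fun k => a k * v k := by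
  obtain ⟨B, hB⟩ := h.bddAbove_range
  have hsum : Summable fun k => a k * v k :=
    summable_of_sum_range_le (fun k => mul_nonneg (ha k) (hv k))
      fun k => (le_add_of_nonneg_left (hv k)).trans (hB ⟨k, rfl⟩)
  exact ⟨⟨_, by simpa using h.sub hsum.hasSum.tendsto_sum_nat⟩, hsum⟩

lemma eq_zero_of_tendsto_of_summable_mul {v a : ℕ → ℝ} (hv : ∀ k, 0 ≤ v k)
    (ha : ∀ k, 0 ≤ a k) (ha_div : ¬Summable a) {L : ℝ} (hL : Tendsto v atTop (𝓝 L))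
    (hsum : Summable fun k => a k * v k) : L = 0 := by
  by_contra hL0
  have hpos : 0 < L := (ge_of_tendsto' hL hv).lt_of_ne' hL0
  refine ha_div ((hsum.mul_left (2 / L)).of_norm_bounded_eventually_nat ?_)
  filter_upwards [hL.eventually (eventually_ge_nhds (half_lt_self hpos))] with k hk
  have hk' : 1 ≤ 2 / L * v k := by rw [div_mul_eq_mul_div, one_le_div hpos]; linarith
  calc ‖a k‖ = a k * 1 := by rw [Real.norm_of_nonneg (ha k), mul_one]
    _ ≤ a k * (2 / L * v k) := mul_le_mul_of_nonneg_left hk' (ha k)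
    _ = 2 / L * (a k * v k) := by ring

section RobbinsSiegmund

variable {Ω : Type*} {m0 : MeasurableSpace Ω} {μ : Measure Ω} [IsFiniteMeasure μ]
  {𝓕 : Filtration ℕ m0}

theorem MeasureTheory.Supermartingale.exists_ae_tendsto_of_nonneg_s15 {X : ℕ → Ω → ℝ}
    (hX : Supermartingale X 𝓕 μ) (hX0 : ∀ k ω, 0 ≤ X k ω) :
    ∀ᵐ ω ∂μ, ∃ c, Tendsto (fun k => X k ω) atTop (𝓝 c) := by
  have hbdd : ∀ k, eLpNorm ((-X) k) 1 μ ≤ (∫ ω, X 0 ω ∂μ).toNNReal := by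
    intro k
    have hk : ∫ ω, X k ω ∂μ ≤ ∫ ω, X 0 ω ∂μ := by
      simpa using hX.setIntegral_le (Nat.zero_le k) MeasurableSet.univ
    rw [Pi.neg_apply, eLpNorm_neg, eLpNorm_one_eq_lintegral_enorm,
      ← ofReal_integral_norm_eq_lintegral_enorm (hX.integrable k)]
    simp [Real.norm_of_nonneg (hX0 k _), hk]
  filter_upwards [hX.neg.exists_ae_tendsto_of_bdd hbdd] with ω ⟨c, hc⟩
  exact ⟨-c, by simpa using hc.neg⟩

lemma tsum_nat_add_eq_add_tsum_nat_add_succ {u : ℕ → ℝ} (hu : Summable u) (k : ℕ) :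
    ∑' j, u (j + k) = u k + ∑' j, u (j + (k + 1)) := by
  simpa [add_assoc, add_comm 1 k] using ((summable_nat_add_iff k).2 hu).tsum_eq_zero_add

theorem supermartingale_add_sum_add_tsum {V : ℕ → Ω → ℝ} {a u : ℕ → ℝ}
    (hV : StronglyAdapted 𝓕 V) (hV_int : ∀ k, Integrable (V k) μ) (hu : Summable u)
    (hstep : ∀ k, μ[V (k + 1)|𝓕 k] ≤ᵐ[μ] fun ω => (1 - a k) * V k ω + u k) :
    Supermartingale (fun k ω => V k ω + ∑ j ∈ range k, a j * V j ω + ∑' j, u (j + k)) 𝓕 μ := by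
  have hS_sm : ∀ {k l}, l ≤ k + 1 → StronglyMeasurable[𝓕 k] fun ω => ∑ j ∈ range l, a j * V j ω :=
    fun hl => Finset.stronglyMeasurable_fun_sum _ fun j hj =>
      (hV.stronglyMeasurable_le (by have := mem_range.1 hj; omega)).const_mul _
  have hS_int : ∀ k, Integrable (fun ω => ∑ j ∈ range k, a j * V j ω) μ :=
    fun k => integrable_finsetSum _ fun j _ => (hV_int j).const_mul _
  refine supermartingale_nat (fun k => ?_) (fun k => ?_) fun k => ?_
  · exact ((hV k).add (hS_sm k.le_succ)).add stronglyMeasurable_const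
  · exact ((hV_int k).add (hS_int k)).add (integrable_const _)
  set R : Ω → ℝ := fun ω => ∑ j ∈ range (k + 1), a j * V j ω + ∑' j, u (j + (k + 1))
  have hR_int : Integrable R μ := (hS_int (k + 1)).add (integrable_const _)
  have hR : μ[R|𝓕 k] = R :=
    condExp_of_stronglyMeasurable (𝓕.le k) ((hS_sm le_rfl).add stronglyMeasurable_const) hR_int
  have hsplit : (fun ω => V (k + 1) ω + ∑ j ∈ range (k + 1), a j * V j ω + ∑' j, u (j + (k + 1)))
      = V (k + 1) + R := by
    ext ω; simp only [Pi.add_apply, R, add_assoc]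
  rw [hsplit]
  filter_upwards [condExp_add (hV_int (k + 1)) hR_int (𝓕 k), hstep k] with ω h_add h_step
  rw [h_add, Pi.add_apply, hR]
  simp only [R, sum_range_succ, tsum_nat_add_eq_add_tsum_nat_add_succ hu k]
  linarith

theorem ae_tendsto_zero_and_summable_of_condExp_le {V : ℕ → Ω → ℝ} {a u : ℕ → ℝ}
    (hV0 : ∀ k ω, 0 ≤ V k ω) (hV : StronglyAdapted 𝓕 V) (hV_int : ∀ k, Integrable (V k) μ)
    (ha : ∀ k, 0 ≤ a k) (ha_div : ¬Summable a) (hu0 : ∀ k, 0 ≤ u k) (hu : Summable u)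
    (hstep : ∀ k, μ[V (k + 1)|𝓕 k] ≤ᵐ[μ] fun ω => (1 - a k) * V k ω + u k) :
    ∀ᵐ ω ∂μ, Tendsto (fun k => V k ω) atTop (𝓝 0) ∧ Summable fun k => a k * V k ω := by
  have hX0 : ∀ k ω, 0 ≤ V k ω + ∑ j ∈ range k, a j * V j ω + ∑' j, u (j + k) := fun k ω =>
    add_nonneg (add_nonneg (hV0 k ω) (sum_nonneg fun j _ => mul_nonneg (ha j) (hV0 j ω)))
      (tsum_nonneg fun j => hu0 _)
  filter_upwards [(supermartingale_add_sum_add_tsum hV hV_int hu hstep).exists_ae_tendsto_of_nonneg_s15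
    hX0] with ω ⟨c, hc⟩
  obtain ⟨⟨L, hL⟩, hsum⟩ := tendsto_and_summable_of_tendsto_add_sum (hV0 · ω) ha
    (by simpa using hc.sub (tendsto_sum_nat_add u))
  exact ⟨eq_zero_of_tendsto_of_summable_mul (hV0 · ω) ha ha_div hL hsum ▸ hL, hsum⟩

end RobbinsSiegmund

theorem stmt15_general {d : ℕ}
    {Ω : Type*} {m0 : MeasurableSpace Ω} {μ : Measure Ω} [IsProbabilityMeasure μ]
    (𝓕 : Filtration ℕ m0)
    (e n : ℕ → Ω → EuclideanSpace ℝ (Fin d))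
    (he_adapted : Adapted 𝓕 e)
    (he_int : ∀ k, Integrable (fun ω => ‖e k ω‖ ^ 2) μ)
    (s : ℕ → ℝ)
    (hn_mean : ∀ k, μ[n k | 𝓕 k] =ᵐ[μ] 0)
    (hn_var : ∀ k, ∀ᵐ ω ∂μ,
      (μ[(fun ω' => ‖n k ω'‖ ^ 2) | 𝓕 k]) ω ≤ (s k) ^ 2)
    (α γ2 : ℕ → ℝ)
    (hα_pos : ∀ k, 0 < α k) (hα_le : ∀ k, α k ≤ 1) (hα_div : ¬ Summable α)
    (hsum : Summable (fun k => (γ2 k) ^ 2 * (s k) ^ 2))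
    (hrec : ∀ k ω, e (k+1) ω = (1 - α k) • e k ω + γ2 k • n k ω) :
    ∀ᵐ ω ∂μ, Tendsto (fun k => e k ω) atTop (𝓝 (0 : EuclideanSpace ℝ (Fin d))) ∧
      Summable (fun k => α k * ‖e k ω‖ ^ 2) := by
  have he_sm : StronglyAdapted 𝓕 e := he_adapted.stronglyAdapted
  have he_L2 : ∀ k, MemLp (e k) 2 μ := fun k =>
    (memLp_two_iff_integrable_sq_norm ((he_sm k).mono (𝓕.le k)).aestronglyMeasurable).2 (he_int k)
  filter_upwards [ae_tendsto_zero_and_summable_of_condExp_le (fun k ω => sq_nonneg ‖e k ω‖)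
    (fun k => (he_sm k).norm.pow 2) he_int (fun k => (hα_pos k).le) hα_div
    (fun k => by positivity) hsum fun k => condExp_norm_sq_le_of_eq_smul_add_smul (𝓕.le k)
      (hα_pos k).le (hα_le k) (he_sm k) (he_L2 k) (he_L2 (k + 1)) (hrec k) (hn_mean k) (hn_var k)]
    with ω ⟨h_sq, h_sum⟩
  refine ⟨tendsto_zero_iff_norm_tendsto_zero.2 ?_, h_sum⟩
  simpa [Real.sqrt_sq (norm_nonneg _)] using h_sq.sqrt

/-- The gradient-tracking-error estimate used in the proof of Theorem 3 of the
paper: if `e^{k+1} = (1 − α^k) e^k + γ₂^k n^k` with conditionally centered noise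
of conditional second moment at most `(s^k)²`, `α^k ∈ (0,1]` non-summable and
`Σ (γ₂^k)²(s^k)² < ∞`, then a.s. `e^k → 0` and `Σ α^k ‖e^k‖² < ∞`. -/
theorem stmt15 {d : ℕ}
    {Ω : Type*} {m0 : MeasurableSpace Ω} {μ : Measure Ω} [IsProbabilityMeasure μ]
    (𝓕 : Filtration ℕ m0)
    (e n : ℕ → Ω → EuclideanSpace ℝ (Fin d))
    (he_adapted : Adapted 𝓕 e)
    (he0 : Integrable (fun ω => ‖e 0 ω‖ ^ 2) μ)
    (he_int : ∀ k, Integrable (fun ω => ‖e k ω‖ ^ 2) μ)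
    (hn_int : ∀ k, Integrable (n k) μ)
    (s : ℕ → ℝ)
    (hn_mean : ∀ k, μ[n k | 𝓕 k] =ᵐ[μ] 0)
    (hn_var : ∀ k, ∀ᵐ ω ∂μ,
      (μ[(fun ω' => ‖n k ω'‖ ^ 2) | 𝓕 k]) ω ≤ (s k) ^ 2)
    (α γ2 : ℕ → ℝ)
    (hα_pos : ∀ k, 0 < α k) (hα_le : ∀ k, α k ≤ 1) (hα_div : ¬ Summable α)
    (hγ2 : ∀ k, 0 ≤ γ2 k)
    (hsum : Summable (fun k => (γ2 k) ^ 2 * (s k) ^ 2))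
    (hrec : ∀ k ω, e (k+1) ω = (1 - α k) • e k ω + γ2 k • n k ω) :
    ∀ᵐ ω ∂μ, Tendsto (fun k => e k ω) atTop (𝓝 (0 : EuclideanSpace ℝ (Fin d))) ∧
      Summable (fun k => α k * ‖e k ω‖ ^ 2) :=
  stmt15_general 𝓕 e n he_adapted he_int s hn_mean hn_var α γ2 hα_pos hα_le hα_div hsum hrec
end
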